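/- arXiv:2110.04215 — 6 statements merged into one kernel-verified Lean document; each statement's English description precedes it below -/
import Mathlib

section
/- Let (L,θ_L) be a 3-LieDer pair, (V;ρ) a representation of the 3-Lie algebra L, and θ_V ∈ End(V). Then (V;ρ,θ_V) is a representation of the 3-LieDer pair (L,θ_L) if and only if θ_L + θ_V (acting as θ_L on L and θ_V on V) is a derivation of the semidirect product 3-Lie algebra L ⋉_ρ V, i.e., (L ⋉_ρ V, θ_L + θ_V) is a 3-LieDer pair. -/
open Function Finset

/-- Total skew-symmetry of a trilinear map (generated by adjacent transpositions). -/
def SkewTri {L V : Type*} [AddCommGroup V] (f : L → L → L → V) : Prop :=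
  (∀ x y z, f x y z = - f y x z) ∧ (∀ x y z, f x y z = - f x z y)

/-- The fundamental identity of a 3-Lie algebra. -/
def FundId {L : Type*} [AddCommGroup L] (f : L → L → L → L) : Prop :=
  ∀ x1 x2 x3 x4 x5,
    f x1 x2 (f x3 x4 x5)
      = f (f x1 x2 x3) x4 x5 + f x3 (f x1 x2 x4) x5 + f x3 x4 (f x1 x2 x5)

/-- Trilinearity of a map `L × L × L → V`. -/
def IsTrilin (F : Type*) {L V : Type*} [Field F] [AddCommGroup L] [Module F L]
    [AddCommGroup V] [Module F V] (f : L → L → L → V) : Prop :=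
  (∀ y z, IsLinearMap F (fun x => f x y z)) ∧
  (∀ x z, IsLinearMap F (fun y => f x y z)) ∧
  (∀ x y, IsLinearMap F (fun z => f x y z))

/-- `θ` is a derivation of the ternary bracket `f`. -/
def IsDeriv3 {W : Type*} [AddCommGroup W] (f : W → W → W → W) (θ : W → W) : Prop :=
  ∀ x y z, θ (f x y z) = f (θ x) y z + f x (θ y) z + f x y (θ z)

/-- `ρ` is a representation of the 3-Lie algebra `(L,f)` on `V`. -/
def IsRep3 (F : Type*) {L V : Type*} [Field F] [AddCommGroup L] [Module F L]
    [AddCommGroup V] [Module F V] (f : L → L → L → L) (ρ : L → L → V → V) : Prop :=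
  (∀ y v, IsLinearMap F (fun x => ρ x y v)) ∧
  (∀ x v, IsLinearMap F (fun y => ρ x y v)) ∧
  (∀ x y, IsLinearMap F (ρ x y)) ∧
  (∀ x y v, ρ x y v = - ρ y x v) ∧
  (∀ x1 x2 x3 x4 v, ρ x1 x2 (ρ x3 x4 v)
      = ρ (f x1 x2 x3) x4 v + ρ x3 (f x1 x2 x4) v + ρ x3 x4 (ρ x1 x2 v)) ∧
  (∀ x1 x2 x3 x4 v, ρ x1 (f x2 x3 x4) v
      = ρ x3 x4 (ρ x1 x2 v) - ρ x2 x4 (ρ x1 x3 v) + ρ x2 x3 (ρ x1 x4 v))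

/-- `(ρ, θV)` is a representation of the 3-LieDer pair `(L, f, θL)` on `V`. -/
def IsRepPair (F : Type*) {L V : Type*} [Field F] [AddCommGroup L] [Module F L]
    [AddCommGroup V] [Module F V] (f : L → L → L → L) (θL : L → L)
    (ρ : L → L → V → V) (θV : V → V) : Prop :=
  IsRep3 F f ρ ∧
  ∀ x y v, θV (ρ x y v) - ρ x y (θV v) = ρ (θL x) y v + ρ x (θL y) v

/-- The semidirect product bracket on `L × V` associated to `f` and `ρ`. -/
def sdBracket {L V : Type*} [AddCommGroup L] [AddCommGroup V]
    (f : L → L → L → L) (ρ : L → L → V → V) :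
    L × V → L × V → L × V → L × V :=
  fun p q r =>
    (f p.1 q.1 r.1, ρ p.1 q.1 r.2 + ρ r.1 p.1 q.2 + ρ q.1 r.1 p.2)

/-- Let `(L, θL)` be a 3-LieDer pair, `(V; ρ)` a representation of the
3-Lie algebra `L`, and `θV ∈ End(V)`.  Then `(V; ρ, θV)` is a representation of the
3-LieDer pair `(L, θL)` if and only if `θL + θV` is a derivation of the semidirect
product 3-Lie algebra `L ⋉_ρ V`. -/
theorem statement2 {F L V : Type*} [Field F] [CharZero F]
    [AddCommGroup L] [Module F L] [FiniteDimensional F L]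
    [AddCommGroup V] [Module F V] [FiniteDimensional F V]
    (f : L → L → L → L) (hf3 : IsTrilin F f) (hfskew : SkewTri f) (hfFI : FundId f)
    (θL : L → L) (hθLlin : IsLinearMap F θL) (hθL : IsDeriv3 f θL)
    (ρ : L → L → V → V) (hrep : IsRep3 F f ρ)
    (θV : V → V) (hθVlin : IsLinearMap F θV) :
    (∀ x y v, θV (ρ x y v) - ρ x y (θV v) = ρ (θL x) y v + ρ x (θL y) v)
    ↔ IsDeriv3 (sdBracket f ρ) (fun p => (θL p.1, θV p.2)) := by
  obtain ⟨hl1, hl2, hl3, hskew, hfund1, hfund2⟩ := hrep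
  have hρ0v : ∀ x y, ρ x y (0 : V) = 0 := fun x y => (hl3 x y).map_zero
  have hρx0 : ∀ x v, ρ x (0 : L) v = 0 := fun x v => (hl2 x v).map_zero
  have hρ0y : ∀ y v, ρ (0 : L) y v = 0 := fun y v => (hl1 y v).map_zero
  constructor
  · intro h p q r
    have key : ∀ x y v, θV (ρ x y v) = ρ x y (θV v) + (ρ (θL x) y v + ρ x (θL y) v) := by
      intro x y v
      rw [eq_add_of_sub_eq (h x y v)]; abel
    simp only [sdBracket, Prod.mk_add_mk, Prod.mk.injEq]
    refine ⟨hθL p.1 q.1 r.1, ?_⟩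
    rw [hθVlin.map_add, hθVlin.map_add, key, key, key]
    abel
  · intro h x y v
    have h2 := congrArg Prod.snd (h (x, 0) (y, 0) (0, v))
    simp only [sdBracket, hρ0v, hρx0, hρ0y, add_zero, zero_add, hθVlin.map_zero, Prod.snd_add] at h2
    rw [sub_eq_iff_eq_add, h2]
end

section
/- Let (V;ρ,θ_V) be a representation of a 3-LieDer pair (L,θ_L). Then the operators d and δ on cochains commute: d∘δ = δ∘d as maps C^p(L;V) → C^{p+1}(L;V) for every p ≥ 1. -/
open Function Finset

section Cochains

/-- `Cochain L V m` models the space `C^{m+1}(L;V) = Hom(⊗^m(∧²L) ⊗ L, V)` of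
`(m+1)`-cochains; an element of `⊗^m(∧²L) ⊗ L` is presented by a tuple of `m`
pairs together with one further element. -/
abbrev Cochain (L V : Type*) (m : ℕ) := (Fin m → L × L) → L → V

variable {L V : Type*} [AddCommGroup L] [AddCommGroup V]

/-- `c` is an honest cochain: it is `F`-linear in every slot and alternating in
each of the `m` pairs (so that it factors through `⊗^m(∧²L) ⊗ L`). -/
def IsCochain (F : Type*) [Field F] [Module F L] [Module F V]
    {m : ℕ} (c : Cochain L V m) : Prop :=
  (∀ (X : Fin m → L × L) (z : L) (i : Fin m) (a : F) (x x' : L),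
      c (Function.update X i (a • x + x', (X i).2)) z
        = a • c (Function.update X i (x, (X i).2)) z
          + c (Function.update X i (x', (X i).2)) z) ∧
  (∀ (X : Fin m → L × L) (z : L) (i : Fin m) (a : F) (y y' : L),
      c (Function.update X i ((X i).1, a • y + y')) z
        = a • c (Function.update X i ((X i).1, y)) z
          + c (Function.update X i ((X i).1, y')) z) ∧
  (∀ (X : Fin m → L × L) (a : F) (z z' : L),
      c X (a • z + z') = a • c X z + c X z') ∧
  (∀ (X : Fin m → L × L) (z : L) (i : Fin m) (x : L),
      c (Function.update X i (x, x)) z = 0)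

/-- The coboundary operator `d : C^{m+1}(L;V) → C^{m+2}(L;V)` of the 3-Lie algebra
`(L, f)` with coefficients in the representation `ρ`.  The bracket
`[Xⱼ,Xₖ]_F = [xⱼ,yⱼ,xₖ]∧yₖ + xₖ∧[xⱼ,yⱼ,yₖ]` is expanded into its two wedge summands. -/
def dOp (f : L → L → L → L) (ρ : L → L → V → V) {m : ℕ}
    (c : Cochain L V m) : Cochain L V (m + 1) :=
  fun X z =>
    (∑ j : Fin (m + 1), ∑ k : Fin (m + 1),
      if j < k then
        ((-1 : ℤ) ^ ((j : ℕ) + 1)) •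
          (c (fun t => (Function.update X k
                (f (X j).1 (X j).2 (X k).1, (X k).2)) (j.succAbove t)) z
            + c (fun t => (Function.update X k
                ((X k).1, f (X j).1 (X j).2 (X k).2)) (j.succAbove t)) z)
      else 0)
    + ∑ j : Fin (m + 1),
        ((-1 : ℤ) ^ ((j : ℕ) + 1)) • c (fun t => X (j.succAbove t)) (f (X j).1 (X j).2 z)
    + ∑ j : Fin (m + 1),
        ((-1 : ℤ) ^ (j : ℕ)) • ρ (X j).1 (X j).2 (c (fun t => X (j.succAbove t)) z)
    + ((-1 : ℤ) ^ m) •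
        ρ (X (Fin.last m)).2 z (c (fun t : Fin m => X t.castSucc) (X (Fin.last m)).1)
    + ((-1 : ℤ) ^ (m + 1)) •
        ρ (X (Fin.last m)).1 z (c (fun t : Fin m => X t.castSucc) (X (Fin.last m)).2)

/-- The operator `δ : C^{m+1}(L;V) → C^{m+1}(L;V)` built from the derivations
`θL` and `θV`; `θL` acts on `∧²L` by `θL(x∧y) = θL(x)∧y + x∧θL(y)`. -/
def deltaOp (θL : L → L) (θV : V → V) {m : ℕ} (c : Cochain L V m) : Cochain L V m :=
  fun X z =>
    (∑ i : Fin m,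
      (c (Function.update X i (θL (X i).1, (X i).2)) z
        + c (Function.update X i ((X i).1, θL (X i).2)) z))
    + c X (θL z) - θV (c X z)

end Cochains


/-! Write an `(m+1)`-cochain as a function of its `2m+1` arguments. Then `δ` lets `θL` act on
each argument in turn and subtracts `θV` (`argDelta`), and every summand of `d` has one of two
shapes: the bracket of two arguments is substituted into a third (`bracketTerm`), or `ρ` of two
arguments acts on the cochain evaluated at the others (`repTerm`). `δ` commutes with the first
because `θL` is a derivation of the bracket and the cochain is additive in each argument, and with
the second because `θV ∘ ρ(x, y) - ρ(x, y) ∘ θV = ρ(θL x, y) + ρ(x, θL y)`. -/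

section ArgDelta

variable {ι κ : Type*} [Fintype ι] [Fintype κ]

structure IsComplPair (e : ι → κ) (a b : κ) : Prop where
  injective : Injective e
  ne : a ≠ b
  ne_fst : ∀ i, e i ≠ a
  ne_snd : ∀ i, e i ≠ b
  cover : ∀ k, k = a ∨ k = b ∨ ∃ i, e i = k

theorem IsComplPair.sum_eq [DecidableEq κ] {M : Type*} [AddCommMonoid M] {e : ι → κ} {a b : κ}
    (h : IsComplPair e a b) (g : κ → M) : ∑ k, g k = g a + g b + ∑ i, g (e i) := by
  have huniv : (univ : Finset κ) = insert a (insert b (univ.map ⟨e, h.injective⟩)) := by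
    ext k
    rcases h.cover k with rfl | rfl | ⟨i, rfl⟩ <;> simp
  rw [huniv, sum_insert, sum_insert, sum_map, add_assoc]
  · rfl
  · simpa using fun i => h.ne_snd i
  · simpa [h.ne] using fun i => h.ne_fst i

variable {L V : Type*} [AddCommGroup V] [DecidableEq ι]

def argDelta (θL : L → L) (θV : V →+ V) : ((ι → L) → V) →+ ((ι → L) → V) where
  toFun c x := ∑ k, c (update x k (θL (x k))) - θV (c x)
  map_zero' := by ext; simp
  map_add' c c' := by ext x; simp only [Pi.add_apply, map_add, sum_add_distrib]; abel

theorem argDelta_apply (θL : L → L) (θV : V →+ V) (c : (ι → L) → V) (x : ι → L) :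
    argDelta θL θV c x = ∑ k, c (update x k (θL (x k))) - θV (c x) := rfl

def bracketTerm (f : L → L → L → L) (e : ι → κ) (a b : κ) (i : ι) (c : (ι → L) → V) :
    (κ → L) → V :=
  fun x => c (update (x ∘ e) i (f (x a) (x b) (x (e i))))

def repTerm (ρ : L → L → V →+ V) (e : ι → κ) (a b : κ) (c : (ι → L) → V) : (κ → L) → V :=
  fun x => ρ (x a) (x b) (c (x ∘ e))

variable [DecidableEq κ] {e : ι → κ} {a b : κ}

theorem argDelta_repTerm (θL : L → L) (θV : V →+ V) (ρ : L → L → V →+ V)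
    (hρ : ∀ u w v, θV (ρ u w v) = ρ u w (θV v) + ρ (θL u) w v + ρ u (θL w) v)
    (h : IsComplPair e a b) (c : (ι → L) → V) :
    argDelta θL θV (repTerm ρ e a b c) = repTerm ρ e a b (argDelta θL θV c) := by
  funext x
  simp only [repTerm, argDelta_apply, h.sum_eq, update_self, update_of_ne h.ne,
    update_of_ne h.ne.symm,    update_of_ne (h.ne_fst _).symm, update_of_ne (h.ne_snd _).symm,
    update_comp_eq_of_forall_ne _ _ h.ne_fst, update_comp_eq_of_forall_ne _ _ h.ne_snd,
    update_comp_eq_of_injective _ h.injective, map_sub, map_sum, hρ, comp_apply]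
  abel

theorem argDelta_bracketTerm [AddCommGroup L] (θL : L → L) (θV : V →+ V) (f : L → L → L → L)
    (hf : IsDeriv3 f θL) (h : IsComplPair e a b) (c : (ι → L) → V)
    (hc : ∀ y i u w, c (update y i (u + w)) = c (update y i u) + c (update y i w)) (i : ι) :
    argDelta θL θV (bracketTerm f e a b i c) = bracketTerm f e a b i (argDelta θL θV c) := by
  funext x
  simp only [bracketTerm, argDelta_apply, h.sum_eq, update_self, update_of_ne h.ne,
    update_of_ne h.ne.symm,    update_of_ne (h.ne_fst _), update_of_ne (h.ne_snd _),
    update_of_ne (h.ne_fst _).symm, update_of_ne (h.ne_snd _).symm,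
    update_comp_eq_of_forall_ne _ _ h.ne_fst, update_comp_eq_of_forall_ne _ _ h.ne_snd,
    update_comp_eq_of_injective _ h.injective]
  rw [Fintype.sum_eq_add_sum_compl i, Fintype.sum_eq_add_sum_compl i]
  have hrest : ∑ i' ∈ {i}ᶜ, c (update (update (x ∘ e) i' (θL (x (e i')))) i
        (f (x a) (x b) (update x (e i') (θL (x (e i'))) (e i))))
      = ∑ i' ∈ {i}ᶜ, c (update (update (x ∘ e) i (f (x a) (x b) (x (e i)))) i'
        (θL (update (x ∘ e) i (f (x a) (x b) (x (e i))) i'))) := by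
    refine sum_congr rfl fun i' hi' => ?_
    have hne : i' ≠ i := by simpa using hi'
    rw [update_of_ne (h.injective.ne hne.symm), update_of_ne hne, update_comm hne.symm]
    rfl
  rw [hrest]
  simp only [update_self, update_idem]
  rw [hf, hc, hc]
  abel

end ArgDelta

section Encoding

variable {L V : Type*}

-- `none` is the last argument `z`; `some (i, false)`, `some (i, true)` are the entries of the
-- `i`-th pair.
abbrev CochainSlot (m : ℕ) := Option (Fin m × Bool)

def cochainArgs {m : ℕ} (X : Fin m → L × L) (z : L) : CochainSlot m → L
  | none => z
  | some (i, false) => (X i).1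
  | some (i, true) => (X i).2

def cochainEquiv (m : ℕ) : Cochain L V m ≃ ((CochainSlot m → L) → V) where
  toFun c x := c (fun i => (x (some (i, false)), x (some (i, true)))) (x none)
  invFun c' X z := c' (cochainArgs X z)
  left_inv _ := rfl
  right_inv c' := by
    funext x
    change c' (cochainArgs _ _) = c' x
    congr 1
    funext s
    rcases s with _ | ⟨i, _ | _⟩ <;> rfl

@[simp]
theorem cochainEquiv_apply_cochainArgs {m : ℕ} (c : Cochain L V m) (X : Fin m → L × L) (z : L) :
    cochainEquiv m c (cochainArgs X z) = c X z := rfl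

theorem exists_cochainArgs_eq {m : ℕ} (x : CochainSlot m → L) :
    ∃ X z, cochainArgs X z = x :=
  ⟨fun i => (x (some (i, false)), x (some (i, true))), x none,
    funext fun s => by rcases s with _ | ⟨i, _ | _⟩ <;> rfl⟩

theorem update_cochainArgs_none {m : ℕ} (X : Fin m → L × L) (z w : L) :
    update (cochainArgs X z) none w = cochainArgs X w := by
  funext s
  rcases s with _ | ⟨i, _ | _⟩ <;> rfl

theorem update_cochainArgs_fst {m : ℕ} (X : Fin m → L × L) (z : L) (i : Fin m) (w : L) :
    update (cochainArgs X z) (some (i, false)) w = cochainArgs (update X i (w, (X i).2)) z := by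
  funext s
  rcases s with _ | ⟨t, _ | _⟩
  · rfl
  all_goals rcases eq_or_ne t i with rfl | h <;> simp [cochainArgs, *]

theorem update_cochainArgs_snd {m : ℕ} (X : Fin m → L × L) (z : L) (i : Fin m) (w : L) :
    update (cochainArgs X z) (some (i, true)) w = cochainArgs (update X i ((X i).1, w)) z := by
  funext s
  rcases s with _ | ⟨t, _ | _⟩
  · rfl
  all_goals rcases eq_or_ne t i with rfl | h <;> simp [cochainArgs, *]

variable [AddCommGroup V]

theorem cochainEquiv_deltaOp {m : ℕ} (θL : L → L) (θV : V →+ V) (c : Cochain L V m) :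
    cochainEquiv m (deltaOp θL θV c) = argDelta θL θV (cochainEquiv m c) := by
  funext x
  obtain ⟨X, z, rfl⟩ := exists_cochainArgs_eq x
  simp only [cochainEquiv_apply_cochainArgs, deltaOp, argDelta_apply, Fintype.sum_option,
    Fintype.sum_prod_type, Fintype.sum_bool, update_cochainArgs_none, update_cochainArgs_fst,
    update_cochainArgs_snd, cochainArgs, sum_add_distrib]
  abel

theorem cochainEquiv_update_add [AddCommGroup L] (F : Type*) [Field F] [Module F L] [Module F V]
    {m : ℕ} {c : Cochain L V m} (hc : IsCochain F c) (x : CochainSlot m → L) (s : CochainSlot m)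
    (u w : L) :
    cochainEquiv m c (update x s (u + w))
      = cochainEquiv m c (update x s u) + cochainEquiv m c (update x s w) := by
  obtain ⟨X, z, rfl⟩ := exists_cochainArgs_eq x
  rcases s with _ | ⟨i, _ | _⟩
  · simpa [update_cochainArgs_none] using hc.2.2.1 X 1 u w
  · simpa [update_cochainArgs_fst] using hc.1 X z i 1 u w
  · simpa [update_cochainArgs_snd] using hc.2.1 X z i 1 u w

end Encoding

section Coboundary

variable {L V : Type*}

def liftSlot {m : ℕ} (j : Fin (m + 1)) : CochainSlot m → CochainSlot (m + 1) :=
  Option.map (Prod.map j.succAbove id)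

def lastSlot {m : ℕ} (β : Bool) : CochainSlot m → CochainSlot (m + 1)
  | none => some (Fin.last m, β)
  | some (t, b) => some (t.castSucc, b)

theorem isComplPair_liftSlot {m : ℕ} (j : Fin (m + 1)) :
    IsComplPair (liftSlot j) (some (j, false)) (some (j, true)) where
  injective := by
    rintro (_ | ⟨t, b⟩) (_ | ⟨t', b'⟩) h <;> simp_all [liftSlot]
  ne := by simp
  ne_fst := by rintro (_ | ⟨t, b⟩) <;> simp [liftSlot, Fin.succAbove_ne]
  ne_snd := by rintro (_ | ⟨t, b⟩) <;> simp [liftSlot, Fin.succAbove_ne]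
  cover := by
    rintro (_ | ⟨k, b⟩)
    · exact Or.inr (Or.inr ⟨none, rfl⟩)
    rcases eq_or_ne k j with rfl | hk
    · cases b <;> simp
    obtain ⟨t, rfl⟩ := Fin.exists_succAbove_eq hk
    exact Or.inr (Or.inr ⟨some (t, b), rfl⟩)

theorem isComplPair_lastSlot {m : ℕ} (β : Bool) :
    IsComplPair (lastSlot (m := m) β) (some (Fin.last m, !β)) none where
  injective := by
    rintro (_ | ⟨t, b⟩) (_ | ⟨t', b'⟩) h <;>
      simp_all [lastSlot, Fin.castSucc_ne_last, (Fin.castSucc_ne_last _).symm]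
  ne := by simp
  ne_fst := by rintro (_ | ⟨t, b⟩) <;> simp [lastSlot, Fin.castSucc_ne_last]
  ne_snd := by rintro (_ | ⟨t, b⟩) <;> simp [lastSlot]
  cover := by
    rintro (_ | ⟨k, b⟩)
    · simp
    rcases Fin.eq_castSucc_or_eq_last k with ⟨t, rfl⟩ | rfl
    · exact Or.inr (Or.inr ⟨some (t, b), rfl⟩)
    rcases Bool.eq_or_eq_not b β with rfl | rfl
    · exact Or.inr (Or.inr ⟨none, rfl⟩)
    · simp

theorem cochainArgs_comp_liftSlot {m : ℕ} (X : Fin (m + 1) → L × L) (z : L) (j : Fin (m + 1)) :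
    cochainArgs X z ∘ liftSlot j = cochainArgs (fun t => X (j.succAbove t)) z := by
  funext s
  rcases s with _ | ⟨t, _ | _⟩ <;> rfl

theorem bracketTerm_liftSlot_fst {m : ℕ} (f : L → L → L → L) (c : Cochain L V m)
    (X : Fin (m + 1) → L × L) (z : L) (j : Fin (m + 1)) (t : Fin m) :
    bracketTerm f (liftSlot j) (some (j, false)) (some (j, true)) (some (t, false))
        (cochainEquiv m c) (cochainArgs X z)
      = c (fun s => update X (j.succAbove t)
          (f (X j).1 (X j).2 (X (j.succAbove t)).1, (X (j.succAbove t)).2) (j.succAbove s)) z := by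
  simp only [bracketTerm, cochainArgs_comp_liftSlot, update_cochainArgs_fst,
    update_comp_eq_of_injective' X Fin.succAbove_right_injective, cochainEquiv_apply_cochainArgs]
  rfl

theorem bracketTerm_liftSlot_snd {m : ℕ} (f : L → L → L → L) (c : Cochain L V m)
    (X : Fin (m + 1) → L × L) (z : L) (j : Fin (m + 1)) (t : Fin m) :
    bracketTerm f (liftSlot j) (some (j, false)) (some (j, true)) (some (t, true))
        (cochainEquiv m c) (cochainArgs X z)
      = c (fun s => update X (j.succAbove t)
          ((X (j.succAbove t)).1, f (X j).1 (X j).2 (X (j.succAbove t)).2) (j.succAbove s)) z := by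
  simp only [bracketTerm, cochainArgs_comp_liftSlot, update_cochainArgs_snd,
    update_comp_eq_of_injective' X Fin.succAbove_right_injective, cochainEquiv_apply_cochainArgs]
  rfl

variable [AddCommGroup V]

-- `dOp` with the index `k > j` of its double sum written as `j.succAbove t`.
def coboundaryArgs (f : L → L → L → L) (ρ : L → L → V →+ V) {m : ℕ}
    (c : (CochainSlot m → L) → V) : (CochainSlot (m + 1) → L) → V :=
  (∑ j : Fin (m + 1), ∑ t : Fin m,
      if j < j.succAbove t then
        ((-1 : ℤ) ^ ((j : ℕ) + 1)) •
          (bracketTerm f (liftSlot j) (some (j, false)) (some (j, true)) (some (t, false)) c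
            + bracketTerm f (liftSlot j) (some (j, false)) (some (j, true)) (some (t, true)) c)
      else 0)
    + ∑ j : Fin (m + 1), ((-1 : ℤ) ^ ((j : ℕ) + 1)) •
        bracketTerm f (liftSlot j) (some (j, false)) (some (j, true)) none c
    + ∑ j : Fin (m + 1), ((-1 : ℤ) ^ (j : ℕ)) •
        repTerm ρ (liftSlot j) (some (j, false)) (some (j, true)) c
    + ((-1 : ℤ) ^ m) • repTerm ρ (lastSlot false) (some (Fin.last m, true)) none c
    + ((-1 : ℤ) ^ (m + 1)) • repTerm ρ (lastSlot true) (some (Fin.last m, false)) none c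

theorem argDelta_coboundaryArgs [AddCommGroup L] (f : L → L → L → L) (ρ : L → L → V →+ V)
    (θL : L → L) (θV : V →+ V) (hf : IsDeriv3 f θL)
    (hρ : ∀ u w v, θV (ρ u w v) = ρ u w (θV v) + ρ (θL u) w v + ρ u (θL w) v)
    {m : ℕ} (c : (CochainSlot m → L) → V)
    (hc : ∀ y i u w, c (update y i (u + w)) = c (update y i u) + c (update y i w)) :
    argDelta θL θV (coboundaryArgs f ρ c) = coboundaryArgs f ρ (argDelta θL θV c) := by
  have hfst : IsComplPair (lastSlot (m := m) false) (some (Fin.last m, true)) none :=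
    isComplPair_lastSlot false
  have hsnd : IsComplPair (lastSlot (m := m) true) (some (Fin.last m, false)) none :=
    isComplPair_lastSlot true
  simp only [coboundaryArgs, map_add, map_sum, map_zsmul, apply_ite (argDelta θL θV), map_zero,
    argDelta_bracketTerm θL θV f hf (isComplPair_liftSlot _) c hc,
    argDelta_repTerm θL θV ρ hρ (isComplPair_liftSlot _),
    argDelta_repTerm θL θV ρ hρ hfst, argDelta_repTerm θL θV ρ hρ hsnd]

theorem cochainEquiv_dOp (f : L → L → L → L) (ρ : L → L → V →+ V) {m : ℕ} (c : Cochain L V m) :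
    cochainEquiv (m + 1) (dOp f (fun u w => ρ u w) c) = coboundaryArgs f ρ (cochainEquiv m c) := by
  funext x
  obtain ⟨X, z, rfl⟩ := exists_cochainArgs_eq x
  simp only [cochainEquiv_apply_cochainArgs, dOp, coboundaryArgs, Finset.sum_apply, Pi.add_apply,
    Pi.smul_apply]
  -- only the double sum needs work: there `dOp` still sums over `k`, including `k = j`
  congr 4
  · refine sum_congr rfl fun j _ => ?_
    rw [Fin.sum_univ_succAbove _ j, if_neg (lt_irrefl j), zero_add]
    refine sum_congr rfl fun t _ => ?_
    split_ifs
    · simp only [Pi.smul_apply, Pi.add_apply, bracketTerm_liftSlot_fst, bracketTerm_liftSlot_snd]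
    · rfl

end Coboundary

theorem statement3_general {F L V : Type*} [Field F] [AddCommGroup L] [Module F L]
    [AddCommGroup V] [Module F V] (f : L → L → L → L) (θL : L → L) (hθL : IsDeriv3 f θL)
    (ρ : L → L → V → V) (θV : V → V) (hθVlin : IsLinearMap F θV)
    (hrep : IsRepPair F f θL ρ θV)
    (m : ℕ) (c : Cochain L V m) (hc : IsCochain F c) :
    dOp f ρ (deltaOp θL θV c) = deltaOp θL θV (dOp f ρ c) := by
  obtain ⟨⟨-, -, hρlin, -, -, -⟩, hpair⟩ := hrep
  let θV' : V →+ V := AddMonoidHom.mk' θV hθVlin.map_add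
  let ρ' : L → L → V →+ V := fun u w => AddMonoidHom.mk' (ρ u w) (hρlin u w).map_add
  have hρ' : ∀ u w v, θV' (ρ' u w v) = ρ' u w (θV' v) + ρ' (θL u) w v + ρ' u (θL w) v :=
    fun u w v => by
      show θV (ρ u w v) = ρ u w (θV v) + ρ (θL u) w v + ρ u (θL w) v
      rw [add_assoc, ← hpair, add_sub_cancel]
  apply (cochainEquiv (m + 1)).injective
  calc cochainEquiv (m + 1) (dOp f ρ (deltaOp θL θV' c))
      = coboundaryArgs f ρ' (argDelta θL θV' (cochainEquiv m c)) := by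
        rw [← cochainEquiv_deltaOp]; exact cochainEquiv_dOp f ρ' _
    _ = argDelta θL θV' (coboundaryArgs f ρ' (cochainEquiv m c)) :=
        (argDelta_coboundaryArgs f ρ' θL θV' hθL hρ' _ (cochainEquiv_update_add F hc)).symm
    _ = cochainEquiv (m + 1) (deltaOp θL θV' (dOp f ρ c)) := by
        rw [cochainEquiv_deltaOp]; exact congrArg _ (cochainEquiv_dOp f ρ' c).symm

/-- Let `(V; ρ, θV)` be a representation of the 3-LieDer pair
`(L, f, θL)`.  Then the operators `d` and `δ` commute on cochains:
`d ∘ δ = δ ∘ d` as maps `C^p(L;V) → C^{p+1}(L;V)` for every `p ≥ 1`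
(here `p = m + 1`). -/
theorem statement3 {F L V : Type*} [Field F] [CharZero F]
    [AddCommGroup L] [Module F L] [FiniteDimensional F L]
    [AddCommGroup V] [Module F V] [FiniteDimensional F V]
    (f : L → L → L → L) (hf3 : IsTrilin F f) (hfskew : SkewTri f) (hfFI : FundId f)
    (θL : L → L) (hθLlin : IsLinearMap F θL) (hθL : IsDeriv3 f θL)
    (ρ : L → L → V → V) (θV : V → V) (hθVlin : IsLinearMap F θV)
    (hrep : IsRepPair F f θL ρ θV)
    (m : ℕ) (c : Cochain L V m) (hc : IsCochain F c) :
    dOp f ρ (deltaOp θL θV c) = deltaOp θL θV (dOp f ρ c) :=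
  statement3_general f θL hθL ρ θV hθVlin hrep m c hc
end

section
/- Let (L,ω,φ) be a 3-LieDer pair, i.e., ω : ∧³L → L is a 3-Lie bracket and φ a derivation of it. Then for every p ≥ 2 and every (α_p,β_{p−1}) ∈ C^p_{3-LieDer}(L;L), the coboundary of (L,ω,φ) with coefficients in the adjoint representation satisfies ∂(α_p,β_{p−1}) = (−1)^{p−1} [(ω,φ),(α_p,β_{p−1})]_{3-LieDer}, where [(α_p,β_{p−1}),(α_q,β_{q−1})]_{3-LieDer} = ([α_p,α_q]_{3Lie}, (−1)^{p+1}[α_p,β_{q−1}]_{3Lie} + [β_{p−1},α_q]_{3Lie}). -/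
open Function Finset

section GradedBracket

variable {L : Type*} [AddCommGroup L]

/-- `ω ∘ c` for `ω ∈ C²(L;L)` (graded degree 1) and `c ∈ C^{m+1}(L;L)` (graded
degree `m`), specializing the general circle product of the paper. -/
def omegaCirc (ω : L → L → L → L) {m : ℕ} (c : Cochain L L m) : Cochain L L (m + 1) :=
  fun X z =>
    ω (c (fun t : Fin m => X t.castSucc) (X (Fin.last m)).1) (X (Fin.last m)).2 z
    + ω (X (Fin.last m)).1 (c (fun t : Fin m => X t.castSucc) (X (Fin.last m)).2) z
    + ∑ j : Fin (m + 1), ((-1 : ℤ) ^ (m + (j : ℕ))) •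
        ω (X j).1 (X j).2 (c (fun t => X (j.succAbove t)) z)

/-- `c ∘ ω` for `c ∈ C^{m+1}(L;L)` and `ω ∈ C²(L;L)`, specializing the general
circle product of the paper (the `(k-1,1)`-shuffles being made explicit). -/
def circOmega (ω : L → L → L → L) {m : ℕ} (c : Cochain L L m) : Cochain L L (m + 1) :=
  fun X z =>
    (∑ j : Fin (m + 1), ∑ k : Fin (m + 1),
      if j < k then
        ((-1 : ℤ) ^ (j : ℕ)) •
          (c (fun t => (Function.update X k
                (ω (X j).1 (X j).2 (X k).1, (X k).2)) (j.succAbove t)) z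
            + c (fun t => (Function.update X k
                ((X k).1, ω (X j).1 (X j).2 (X k).2)) (j.succAbove t)) z)
      else 0)
    + ∑ j : Fin (m + 1),
        ((-1 : ℤ) ^ (j : ℕ)) • c (fun t => X (j.succAbove t)) (ω (X j).1 (X j).2 z)

/-- `φ ∘ c` for `φ ∈ C¹(L;L)` (graded degree 0). -/
def phiCirc (φ : L → L) {m : ℕ} (c : Cochain L L m) : Cochain L L m :=
  fun X z => φ (c X z)

/-- `c ∘ φ` for `φ ∈ C¹(L;L)` (graded degree 0). -/
def circPhi (φ : L → L) {m : ℕ} (c : Cochain L L m) : Cochain L L m :=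
  fun X z =>
    (∑ i : Fin m,
      (c (Function.update X i (φ (X i).1, (X i).2)) z
        + c (Function.update X i ((X i).1, φ (X i).2)) z))
    + c X (φ z)

end GradedBracket

section Aux

variable {L : Type*} [AddCommGroup L]

private lemma neg_ite_zero {P : Prop} [Decidable P] (a : L) :
    (if P then -a else 0) = -(if P then a else 0) := by split <;> simp

private lemma key_pow (n j : ℕ) : ((-1 : ℤ) ^ n) * ((-1 : ℤ) ^ (n + j)) = (-1 : ℤ) ^ j := by
  rw [pow_add, ← mul_assoc, ← mul_pow]; simp

/-- The key pointwise computation: `dOp ω ω c = (-1)^n • omegaCirc ω c - circOmega ω c`. -/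
private lemma key (ω : L → L → L → L) (hskew : SkewTri ω) {n : ℕ}
    (c : Cochain L L n) (X : Fin (n + 1) → L × L) (z : L) :
    dOp ω ω c X z = ((-1 : ℤ) ^ n) • omegaCirc ω c X z - circOmega ω c X z := by
  have cyc : ∀ a b d, ω a b d = ω d a b := by
    intro a b d
    rw [hskew.2, hskew.1, neg_neg]
  have skew23 : ∀ a b d, ω a b d = - ω a d b := hskew.2
  have h1 : ∀ (j : ℕ) (a : L), ((-1 : ℤ) ^ (j + 1)) • a = -(((-1 : ℤ) ^ j) • a) := by
    intro j a
    rw [pow_succ, mul_smul]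
    simp
  unfold dOp omegaCirc circOmega
  rw [smul_add, smul_add, Finset.smul_sum]
  have h2 : ∀ j : Fin (n + 1),
      ((-1 : ℤ) ^ n) • ((-1 : ℤ) ^ (n + (j : ℕ))) • ω (X j).1 (X j).2 (c (fun t => X (j.succAbove t)) z)
        = ((-1 : ℤ) ^ (j : ℕ)) • ω (X j).1 (X j).2 (c (fun t => X (j.succAbove t)) z) := by
    intro j
    rw [smul_smul, key_pow]
  rw [Finset.sum_congr rfl fun j _ => h2 j]
  have h3 : (∑ j : Fin (n + 1), ∑ k : Fin (n + 1),
      if j < k then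
        ((-1 : ℤ) ^ ((j : ℕ) + 1)) •
          (c (fun t => (Function.update X k
                (ω (X j).1 (X j).2 (X k).1, (X k).2)) (j.succAbove t)) z
            + c (fun t => (Function.update X k
                ((X k).1, ω (X j).1 (X j).2 (X k).2)) (j.succAbove t)) z)
      else 0)
    = -(∑ j : Fin (n + 1), ∑ k : Fin (n + 1),
      if j < k then
        ((-1 : ℤ) ^ (j : ℕ)) •
          (c (fun t => (Function.update X k
                (ω (X j).1 (X j).2 (X k).1, (X k).2)) (j.succAbove t)) z
            + c (fun t => (Function.update X k
                ((X k).1, ω (X j).1 (X j).2 (X k).2)) (j.succAbove t)) z)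
      else 0) := by
    rw [← Finset.sum_neg_distrib]
    refine Finset.sum_congr rfl fun j _ => ?_
    rw [← Finset.sum_neg_distrib]
    refine Finset.sum_congr rfl fun k _ => ?_
    rw [h1, neg_ite_zero]
  have h4 : (∑ j : Fin (n + 1),
      ((-1 : ℤ) ^ ((j : ℕ) + 1)) • c (fun t => X (j.succAbove t)) (ω (X j).1 (X j).2 z))
    = -(∑ j : Fin (n + 1),
      ((-1 : ℤ) ^ (j : ℕ)) • c (fun t => X (j.succAbove t)) (ω (X j).1 (X j).2 z)) := by
    rw [← Finset.sum_neg_distrib]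
    exact Finset.sum_congr rfl fun j _ => h1 _ _
  rw [h3, h4]
  rw [cyc ((X (Fin.last n)).2) z, skew23 ((X (Fin.last n)).1) z, h1 n]
  simp only [smul_neg, neg_neg]
  abel

end Aux

/-- Let `(L, ω, φ)` be a 3-LieDer pair.  For every `p = m + 2 ≥ 2`
and every `(α_p, β_{p-1}) ∈ C^p_{3-LieDer}(L;L)` (with the adjoint coefficients
`ρ = ad = ω`), the coboundary satisfies
`∂(α_p, β_{p-1}) = (-1)^{p-1} [(ω,φ), (α_p,β_{p-1})]_{3-LieDer}`, where
`[(ω,φ),(α_p,β_{p-1})]_{3-LieDer} = ([ω,α_p]_{3Lie}, (-1)^{2+1}[ω,β_{p-1}]_{3Lie} + [φ,α_p]_{3Lie})`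
and `[P,Q]_{3Lie} = P∘Q - (-1)^{|P||Q|} Q∘P`. -/
theorem statement7 {F L : Type*} [Field F] [CharZero F]
    [AddCommGroup L] [Module F L] [FiniteDimensional F L]
    (ω : L → L → L → L) (h3 : IsTrilin F ω) (hskew : SkewTri ω) (hFI : FundId ω)
    (φ : L → L) (hφlin : IsLinearMap F φ) (hφ : IsDeriv3 ω φ)
    (m : ℕ) (α : Cochain L L (m + 1)) (β : Cochain L L m)
    (hα : IsCochain F α) (hβ : IsCochain F β) :
    (dOp ω ω α, dOp ω ω β + ((-1 : ℤ) ^ (m + 2)) • deltaOp φ φ α)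
      = ((-1 : ℤ) ^ (m + 1)) •
          ((omegaCirc ω α - ((-1 : ℤ) ^ (m + 1)) • circOmega ω α,
            (- (omegaCirc ω β - ((-1 : ℤ) ^ m) • circOmega ω β))
              + (phiCirc φ α - circPhi φ α)) :
            Cochain L L (m + 2) × Cochain L L (m + 1)) := by
  have hdelta : ∀ (X : Fin (m + 1) → L × L) (z : L),
      deltaOp φ φ α X z = circPhi φ α X z - phiCirc φ α X z := by
    intro X z
    simp only [deltaOp, circPhi, phiCirc]
  have e1 : ((-1 : ℤ) ^ (m + 1)) = -((-1 : ℤ) ^ m) := by rw [pow_succ]; ring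
  have e2 : ((-1 : ℤ) ^ (m + 2)) = ((-1 : ℤ) ^ m) := by rw [pow_succ, pow_succ]; ring
  have hsq : ∀ a : L, ((-1 : ℤ) ^ m) • ((-1 : ℤ) ^ m) • a = a := by
    intro a
    rw [smul_smul, ← mul_pow]
    simp
  have hsq1 : ((-1 : ℤ) ^ (m + 1)) * ((-1 : ℤ) ^ (m + 1)) = 1 := by
    rw [← mul_pow]; simp
  refine Prod.ext ?_ ?_
  · show dOp ω ω α = (((-1 : ℤ) ^ (m + 1)) •
      (omegaCirc ω α - ((-1 : ℤ) ^ (m + 1)) • circOmega ω α))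
    funext X z
    rw [key ω hskew α X z]
    simp only [Pi.smul_apply, Pi.sub_apply, smul_sub, smul_smul, hsq1, one_smul]
  · show dOp ω ω β + ((-1 : ℤ) ^ (m + 2)) • deltaOp φ φ α
      = (((-1 : ℤ) ^ (m + 1)) •
          ((- (omegaCirc ω β - ((-1 : ℤ) ^ m) • circOmega ω β))
            + (phiCirc φ α - circPhi φ α)))
    funext X z
    simp only [Pi.add_apply, Pi.smul_apply, Pi.sub_apply, Pi.neg_apply]
    rw [key ω hskew β X z, hdelta X z, e1, e2]
    simp only [neg_smul, smul_add, smul_sub, smul_neg, neg_neg, hsq]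
    abel
end

section
/- Let (f_t,g_t) be a one-parameter formal deformation of a 3-LieDer pair (L,θ_L). Then the infinitesimal (f_1,g_1) is a 2-cocycle of the 3-LieDer pair (L,θ_L) with coefficients in the adjoint representation: (f_1,g_1) ∈ Z²_{3-LieDer}(L;L), i.e., d f_1 = 0 and d g_1 + δ f_1 = 0. -/
open Function Finset

section Deformations

/-- Formal power series with coefficients in `L`, i.e. the module `L[[t]]`. -/
abbrev LTSeries3 (L : Type*) := ℕ → L

variable {L A : Type*} [AddCommGroup L] [AddCommGroup A]

/-- The `F[[t]]`-trilinear extension `f_t = Σ fᵢ tⁱ` of a family of trilinear maps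
to `L[[t]]`, computed by convolution of coefficients. -/
def Ft (f : ℕ → L → L → L → L) : LTSeries3 L → LTSeries3 L → LTSeries3 L → LTSeries3 L :=
  fun a b c n =>
    ∑ p ∈ Finset.range (n + 1), ∑ q ∈ Finset.range (n + 1 - p),
      ∑ r ∈ Finset.range (n + 1 - p - q),
        f p (a q) (b r) (c (n - p - q - r))

/-- The `F[[t]]`-linear extension `g_t = Σ gᵢ tⁱ` of a family of linear maps to
`L[[t]]`. -/
def Gt (g : ℕ → L → L) : LTSeries3 L → LTSeries3 L :=
  fun a n => ∑ p ∈ Finset.range (n + 1), g p (a (n - p))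

/-- `(f_t, g_t)` is a one-parameter formal deformation of the 3-LieDer pair
`(L, bracket, θ)`: each `fᵢ` is trilinear skew-symmetric with `f₀` the original
bracket, each `gᵢ` is linear with `g₀ = θ`, and `(L[[t]], f_t, g_t)` is a
3-LieDer pair over `F[[t]]`. -/
def IsDeformation (F : Type*) {L : Type*} [Field F] [AddCommGroup L] [Module F L]
    (bracket : L → L → L → L) (θ : L → L)
    (f : ℕ → L → L → L → L) (g : ℕ → L → L) : Prop :=
  f 0 = bracket ∧ g 0 = θ ∧
  (∀ i, IsTrilin F (f i)) ∧ (∀ i, SkewTri (f i)) ∧ (∀ i, IsLinearMap F (g i)) ∧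
  FundId (Ft f) ∧ IsDeriv3 (Ft f) (Gt g)

/-- The coboundary `d : C¹(B;A) → C²(B;A)` with coefficients in `ρ`. -/
def d1c {B : Type*} (br : B → B → B → B) (ρ : B → B → A → A) (χ : B → A) :
    B → B → B → A :=
  fun x y z => ρ x y (χ z) - χ (br x y z) + ρ y z (χ x) - ρ x z (χ y)

/-- The coboundary `d : C²(B;A) → C³(B;A)` with coefficients in `ρ`. -/
def d2c {B : Type*} (br : B → B → B → B) (ρ : B → B → A → A) (ψ : B → B → B → A) :
    B → B → B → B → B → A :=
  fun x1 x2 x3 x4 z =>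
    - ψ (br x1 x2 x3) x4 z - ψ x3 (br x1 x2 x4) z
    - ψ x3 x4 (br x1 x2 z) + ψ x1 x2 (br x3 x4 z)
    + ρ x1 x2 (ψ x3 x4 z) - ρ x3 x4 (ψ x1 x2 z)
    - ρ x4 z (ψ x1 x2 x3) + ρ x3 z (ψ x1 x2 x4)

/-- The coboundary `d : C³(B;A) → C⁴(B;A)` with coefficients in `ρ` (arguments
`(a₁∧b₁, a₂∧b₂, a₃∧b₃, z)`). -/
def d3c {B : Type*} (br : B → B → B → B) (ρ : B → B → A → A)
    (α : B → B → B → B → B → A) : B → B → B → B → B → B → B → A :=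
  fun a1 b1 a2 b2 a3 b3 z =>
    - α (br a1 b1 a2) b2 a3 b3 z - α a2 (br a1 b1 b2) a3 b3 z
    - α a2 b2 (br a1 b1 a3) b3 z - α a2 b2 a3 (br a1 b1 b3) z
    + α a1 b1 (br a2 b2 a3) b3 z + α a1 b1 a3 (br a2 b2 b3) z
    - α a2 b2 a3 b3 (br a1 b1 z) + α a1 b1 a3 b3 (br a2 b2 z)
    - α a1 b1 a2 b2 (br a3 b3 z)
    + ρ a1 b1 (α a2 b2 a3 b3 z) - ρ a2 b2 (α a1 b1 a3 b3 z)
    + ρ a3 b3 (α a1 b1 a2 b2 z)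
    + ρ b3 z (α a1 b1 a2 b2 a3) - ρ a3 z (α a1 b1 a2 b2 b3)

/-- The operator `δ : C¹(B;A) → C¹(B;A)`. -/
def delta1c {B : Type*} (θB : B → B) (θA : A → A) (χ : B → A) : B → A :=
  fun z => χ (θB z) - θA (χ z)

/-- The operator `δ : C²(B;A) → C²(B;A)`. -/
def delta2c {B : Type*} (θB : B → B) (θA : A → A) (ψ : B → B → B → A) :
    B → B → B → A :=
  fun x y z => ψ (θB x) y z + ψ x (θB y) z + ψ x y (θB z) - θA (ψ x y z)

/-- The operator `δ : C³(B;A) → C³(B;A)`. -/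
def delta3c {B : Type*} (θB : B → B) (θA : A → A) (α : B → B → B → B → B → A) :
    B → B → B → B → B → A :=
  fun a1 b1 a2 b2 z =>
    α (θB a1) b1 a2 b2 z + α a1 (θB b1) a2 b2 z + α a1 b1 (θB a2) b2 z
    + α a1 b1 a2 (θB b2) z + α a1 b1 a2 b2 (θB z) - θA (α a1 b1 a2 b2 z)

end Deformations


section AuxS9
variable {L : Type*} [AddCommGroup L]

/-- Delta series: `x` in degree 0. -/
def dlS9 (x : L) : LTSeries3 L := fun n => if n = 0 then x else 0

lemma ftS9_fst (f : ℕ → L → L → L → L)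
    (fz1 : ∀ i y z, f i 0 y z = 0) (fz2 : ∀ i x z, f i x 0 z = 0)
    (fz3 : ∀ i x y, f i x y 0 = 0) (C : LTSeries3 L) (y z : L) :
    Ft f C (dlS9 y) (dlS9 z) 1 = f 0 (C 1) y z + f 1 (C 0) y z := by
  simp [Ft, dlS9, Finset.sum_range_succ, fz1, fz2, fz3]

lemma ftS9_snd (f : ℕ → L → L → L → L)
    (fz1 : ∀ i y z, f i 0 y z = 0) (fz2 : ∀ i x z, f i x 0 z = 0)
    (fz3 : ∀ i x y, f i x y 0 = 0) (C : LTSeries3 L) (x z : L) :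
    Ft f (dlS9 x) C (dlS9 z) 1 = f 0 x (C 1) z + f 1 x (C 0) z := by
  simp [Ft, dlS9, Finset.sum_range_succ, fz1, fz2, fz3]

lemma ftS9_thd (f : ℕ → L → L → L → L)
    (fz1 : ∀ i y z, f i 0 y z = 0) (fz2 : ∀ i x z, f i x 0 z = 0)
    (fz3 : ∀ i x y, f i x y 0 = 0) (C : LTSeries3 L) (x y : L) :
    Ft f (dlS9 x) (dlS9 y) C 1 = f 0 x y (C 1) + f 1 x y (C 0) := by
  simp [Ft, dlS9, Finset.sum_range_succ, fz1, fz2, fz3]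

lemma ftS9_zero (f : ℕ → L → L → L → L) (x y z : L) :
    Ft f (dlS9 x) (dlS9 y) (dlS9 z) 0 = f 0 x y z := by
  simp [Ft, dlS9]

lemma gtS9_dl (g : ℕ → L → L) (gz : ∀ i, g i 0 = 0) (x : L) :
    Gt g (dlS9 x) 0 = g 0 x ∧ Gt g (dlS9 x) 1 = g 1 x := by
  constructor <;> simp [Gt, dlS9, Finset.sum_range_succ, gz]

lemma gtS9_one (g : ℕ → L → L) (C : LTSeries3 L) :
    Gt g C 1 = g 0 (C 1) + g 1 (C 0) := by
  simp [Gt, Finset.sum_range_succ]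

end AuxS9

/-- Let `(f_t, g_t)` be a one-parameter formal deformation of the
3-LieDer pair `(L, bracket, θ)`.  Then the infinitesimal `(f₁, g₁)` is a
2-cocycle with coefficients in the adjoint representation:
`d f₁ = 0` and `d g₁ + δ f₁ = 0`. -/
theorem statement9 {F L : Type*} [Field F] [CharZero F]
    [AddCommGroup L] [Module F L] [FiniteDimensional F L]
    (bracket : L → L → L → L) (hb3 : IsTrilin F bracket) (hbskew : SkewTri bracket)
    (hbFI : FundId bracket)
    (θ : L → L) (hθlin : IsLinearMap F θ) (hθ : IsDeriv3 bracket θ)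
    (f : ℕ → L → L → L → L) (g : ℕ → L → L)
    (hdef : IsDeformation F bracket θ f g) :
    d2c bracket bracket (f 1) = 0 ∧
    d1c bracket bracket (g 1) + delta2c θ θ (f 1) = 0 := by
  obtain ⟨hf0, hg0, htri, hskew, hglin, hFI, hD⟩ := hdef
  have fz1 : ∀ i (y z : L), f i 0 y z = 0 := fun i y z => ((htri i).1 y z).map_zero
  have fz2 : ∀ i (x z : L), f i x 0 z = 0 := fun i x z => ((htri i).2.1 x z).map_zero
  have fz3 : ∀ i (x y : L), f i x y 0 = 0 := fun i x y => ((htri i).2.2 x y).map_zero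
  have gz : ∀ i, g i (0 : L) = 0 := fun i => (hglin i).map_zero
  have rot : ∀ a b c : L, bracket a b c = bracket b c a := by
    intro a b c
    rw [hbskew.1, hbskew.2, neg_neg]
  constructor
  · funext x1 x2 x3 x4 z
    have h := congrFun (hFI (dlS9 x1) (dlS9 x2) (dlS9 x3) (dlS9 x4) (dlS9 z)) 1
    simp only [Pi.add_apply, ftS9_fst f fz1 fz2 fz3, ftS9_snd f fz1 fz2 fz3,
      ftS9_thd f fz1 fz2 fz3, ftS9_zero] at h
    simp [dlS9, fz1, fz2, fz3, hf0] at h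
    rw [rot (f 1 x1 x2 x3) x4 z, hbskew.2 x3 (f 1 x1 x2 x4) z] at h
    have h2 : (bracket x1 x2 (f 1 x3 x4 z) + f 1 x1 x2 (bracket x3 x4 z)) -
        (bracket x4 z (f 1 x1 x2 x3) + f 1 (bracket x1 x2 x3) x4 z +
        (-bracket x3 z (f 1 x1 x2 x4) + f 1 x3 (bracket x1 x2 x4) z) +
        (bracket x3 x4 (f 1 x1 x2 z) + f 1 x3 x4 (bracket x1 x2 z))) = 0 := by
      rw [h]; abel
    simp only [d2c, Pi.zero_apply]
    rw [← h2]; abel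
  · funext x y z
    have h := congrFun (hD (dlS9 x) (dlS9 y) (dlS9 z)) 1
    simp only [Pi.add_apply, ftS9_fst f fz1 fz2 fz3, ftS9_snd f fz1 fz2 fz3,
      ftS9_thd f fz1 fz2 fz3, ftS9_zero, gtS9_one, (gtS9_dl g gz _).1,
      (gtS9_dl g gz _).2] at h
    simp [dlS9, fz1, fz2, fz3, gz, hf0, hg0] at h
    rw [rot (g 1 x) y z, hbskew.2 x (g 1 y) z] at h
    have h2 : (bracket y z (g 1 x) + f 1 (θ x) y z +
        (-bracket x z (g 1 y) + f 1 x (θ y) z) +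
        (bracket x y (g 1 z) + f 1 x y (θ z))) -
        (θ (f 1 x y z) + g 1 (bracket x y z)) = 0 := by
      rw [← h]; abel
    simp only [Pi.add_apply, Pi.zero_apply, d1c, delta2c]
    rw [← h2]; abel
end

section
/- Let (f_t,g_t) be a one-parameter formal deformation of a 3-LieDer pair (L,θ_L), and suppose (f_i,g_i) = 0 for all 1 ≤ i < n. Then the n-infinitesimal (f_n,g_n) is a 2-cocycle: (f_n,g_n) ∈ Z²_{3-LieDer}(L;L) with coefficients in the adjoint representation. -/
open Function Finset

section Aux

variable {F L : Type*} [Field F] [AddCommGroup L] [Module F L]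

/-- Series concentrated in degree 0. -/
def eS3 (x : L) : LTSeries3 L := fun k => if k = 0 then x else 0

lemma eS3_zero (x : L) : eS3 x 0 = x := rfl

lemma eS3_pos (x : L) {k : ℕ} (hk : k ≠ 0) : eS3 x k = 0 := if_neg hk

lemma sum_two {M : Type*} [AddCommMonoid M] {n : ℕ} (hn : 1 ≤ n) (T : ℕ → M)
    (h : ∀ p, 1 ≤ p → p < n → T p = 0) :
    ∑ p ∈ Finset.range (n + 1), T p = T 0 + T n := by
  have h0n : (0 : ℕ) ≠ n := by omega
  rw [← Finset.sum_pair h0n]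
  refine (Finset.sum_subset ?_ ?_).symm
  · intro p hp
    simp only [Finset.mem_insert, Finset.mem_singleton] at hp
    simp only [Finset.mem_range]; omega
  · intro p hp hps
    simp only [Finset.mem_range] at hp
    simp only [Finset.mem_insert, Finset.mem_singleton, not_or] at hps
    exact h p (by omega) (by omega)

lemma slot1 (f : ℕ → L → L → L → L) (hf : ∀ i, IsTrilin F (f i))
    (a : LTSeries3 L) (y z : L) (n : ℕ) :
    Ft f a (eS3 y) (eS3 z) n = ∑ p ∈ Finset.range (n + 1), f p (a (n - p)) y z := by
  unfold Ft
  refine Finset.sum_congr rfl fun p hp => ?_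
  simp only [Finset.mem_range] at hp
  rw [Finset.sum_eq_single_of_mem (n - p) (by simp only [Finset.mem_range]; omega)]
  · have h1 : n + 1 - p - (n - p) = 1 := by omega
    have h2 : n - p - (n - p) - 0 = 0 := by omega
    rw [h1, Finset.sum_range_one, h2, eS3_zero, eS3_zero]
  · intro q hq hqne
    simp only [Finset.mem_range] at hq
    refine Finset.sum_eq_zero fun r hr => ?_
    rcases eq_or_ne r 0 with h | h
    · subst h
      rw [eS3_pos z (by omega)]
      exact ((hf p).2.2 _ _).map_zero
    · rw [eS3_pos y h]
      exact ((hf p).2.1 _ _).map_zero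

lemma slot2 (f : ℕ → L → L → L → L) (hf : ∀ i, IsTrilin F (f i))
    (x : L) (b : LTSeries3 L) (z : L) (n : ℕ) :
    Ft f (eS3 x) b (eS3 z) n = ∑ p ∈ Finset.range (n + 1), f p x (b (n - p)) z := by
  unfold Ft
  refine Finset.sum_congr rfl fun p hp => ?_
  simp only [Finset.mem_range] at hp
  rw [Finset.sum_eq_single_of_mem 0 (by simp only [Finset.mem_range]; omega)]
  · rw [Finset.sum_eq_single_of_mem (n - p) (by simp only [Finset.mem_range]; omega)]
    · have h2 : n - p - 0 - (n - p) = 0 := by omega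
      rw [h2, eS3_zero, eS3_zero]
    · intro r hr hrne
      simp only [Finset.mem_range] at hr
      rw [eS3_pos z (by omega)]
      exact ((hf p).2.2 _ _).map_zero
  · intro q hq hqne
    refine Finset.sum_eq_zero fun r hr => ?_
    rw [eS3_pos x hqne]
    exact ((hf p).1 _ _).map_zero

lemma slot3 (f : ℕ → L → L → L → L) (hf : ∀ i, IsTrilin F (f i))
    (x y : L) (c : LTSeries3 L) (n : ℕ) :
    Ft f (eS3 x) (eS3 y) c n = ∑ p ∈ Finset.range (n + 1), f p x y (c (n - p)) := by
  unfold Ft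
  refine Finset.sum_congr rfl fun p hp => ?_
  simp only [Finset.mem_range] at hp
  rw [Finset.sum_eq_single_of_mem 0 (by simp only [Finset.mem_range]; omega)]
  · rw [Finset.sum_eq_single_of_mem 0 (by simp only [Finset.mem_range]; omega)]
    · rw [eS3_zero, eS3_zero]
      norm_num
    · intro r hr hrne
      rw [eS3_pos y hrne]
      exact ((hf p).2.1 _ _).map_zero
  · intro q hq hqne
    refine Finset.sum_eq_zero fun r hr => ?_
    rw [eS3_pos x hqne]
    exact ((hf p).1 _ _).map_zero

lemma ftE (f : ℕ → L → L → L → L) (hf : ∀ i, IsTrilin F (f i)) (x y z : L) :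
    Ft f (eS3 x) (eS3 y) (eS3 z) = fun m => f m x y z := by
  funext m
  rw [slot3 f hf]
  rw [Finset.sum_eq_single_of_mem m (by simp)]
  · rw [Nat.sub_self, eS3_zero]
  · intro p hp hpm
    simp only [Finset.mem_range] at hp
    rw [eS3_pos z (by omega)]
    exact ((hf p).2.2 _ _).map_zero

lemma gtE (g : ℕ → L → L) (hg : ∀ i, IsLinearMap F (g i)) (x : L) :
    Gt g (eS3 x) = fun k => g k x := by
  funext k
  unfold Gt
  rw [Finset.sum_eq_single_of_mem k (by simp)]
  · rw [Nat.sub_self, eS3_zero]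
  · intro p hp hpk
    simp only [Finset.mem_range] at hp
    rw [eS3_pos x (by omega), (hg p).map_zero]

end Aux

/-- Let `(f_t, g_t)` be a one-parameter formal deformation of the
3-LieDer pair `(L, bracket, θ)` with `(fᵢ, gᵢ) = 0` for all `1 ≤ i < n`.  Then the
`n`-infinitesimal `(fₙ, gₙ)` is a 2-cocycle with coefficients in the adjoint
representation: `d fₙ = 0` and `d gₙ + δ fₙ = 0`. -/
theorem statement10 {F L : Type*} [Field F] [CharZero F]
    [AddCommGroup L] [Module F L] [FiniteDimensional F L]
    (bracket : L → L → L → L) (hb3 : IsTrilin F bracket) (hbskew : SkewTri bracket)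
    (hbFI : FundId bracket)
    (θ : L → L) (hθlin : IsLinearMap F θ) (hθ : IsDeriv3 bracket θ)
    (f : ℕ → L → L → L → L) (g : ℕ → L → L)
    (hdef : IsDeformation F bracket θ f g)
    (n : ℕ) (hn : 1 ≤ n)
    (hvanish : ∀ i, 1 ≤ i → i < n → f i = 0 ∧ g i = 0) :
    d2c bracket bracket (f n) = 0 ∧
    d1c bracket bracket (g n) + delta2c θ θ (f n) = 0 := by
  obtain ⟨hf0, hg0, hftri, hfskew, hglin, hFI, hDer⟩ := hdef
  have hvf : ∀ p, 1 ≤ p → p < n → f p = 0 := fun p a b => (hvanish p a b).1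
  have hvg : ∀ p, 1 ≤ p → p < n → g p = 0 := fun p a b => (hvanish p a b).2
  have red1 : ∀ (a : LTSeries3 L) (y z : L),
      Ft f a (eS3 y) (eS3 z) n = bracket (a n) y z + f n (a 0) y z := by
    intro a y z
    rw [slot1 f hftri,
      sum_two hn (fun p => f p (a (n - p)) y z) (fun p h1 h2 => by simp [hvf p h1 h2])]
    simp [hf0]
  have red2 : ∀ (x : L) (b : LTSeries3 L) (z : L),
      Ft f (eS3 x) b (eS3 z) n = bracket x (b n) z + f n x (b 0) z := by
    intro x b z
    rw [slot2 f hftri,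
      sum_two hn (fun p => f p x (b (n - p)) z) (fun p h1 h2 => by simp [hvf p h1 h2])]
    simp [hf0]
  have red3 : ∀ (x y : L) (c : LTSeries3 L),
      Ft f (eS3 x) (eS3 y) c n = bracket x y (c n) + f n x y (c 0) := by
    intro x y c
    rw [slot3 f hftri,
      sum_two hn (fun p => f p x y (c (n - p))) (fun p h1 h2 => by simp [hvf p h1 h2])]
    simp [hf0]
  have redG : ∀ (c : LTSeries3 L), Gt g c n = θ (c n) + g n (c 0) := by
    intro c
    unfold Gt
    rw [sum_two hn (fun p => g p (c (n - p))) (fun p h1 h2 => by simp [hvg p h1 h2])]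
    simp [hg0]
  have sk1 : ∀ a b u : L, bracket a b u = bracket u a b := by
    intro a b u
    rw [hbskew.2 a b u, hbskew.1 a u b, neg_neg]
  constructor
  · funext x1 x2 x3 x4 z
    have key := congrFun (hFI (eS3 x1) (eS3 x2) (eS3 x3) (eS3 x4) (eS3 z)) n
    simp only [Pi.add_apply] at key
    rw [ftE f hftri x3 x4 z, ftE f hftri x1 x2 x3, ftE f hftri x1 x2 x4,
        ftE f hftri x1 x2 z] at key
    simp only [red1, red2, red3, hf0] at key
    have key2 := sub_eq_zero_of_eq key
    simp only [d2c, Pi.zero_apply]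
    rw [sk1 x4 z (f n x1 x2 x3), hbskew.2 x3 z (f n x1 x2 x4)]
    rw [← key2]
    abel
  · funext x y z
    have key := congrFun (hDer (eS3 x) (eS3 y) (eS3 z)) n
    simp only [Pi.add_apply] at key
    rw [ftE f hftri x y z, gtE g hglin x, gtE g hglin y, gtE g hglin z] at key
    simp only [redG, red1, red2, red3, hf0, hg0] at key
    have key2 := sub_eq_zero_of_eq key.symm
    simp only [Pi.add_apply, Pi.zero_apply, d1c, delta2c]
    rw [sk1 y z (g n x), hbskew.2 x z (g n y)]
    rw [← key2]
    abel
end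

section
/- Let (L,θ_L) be a 3-LieDer pair. If H²_{3-LieDer}(L;L) = 0 (cohomology with coefficients in the adjoint representation), then (L,θ_L) is rigid: every one-parameter formal deformation of (L,θ_L) is equivalent to the trivial deformation (f_0,g_0) = ([·,·,·]_L, θ_L). -/
open Function Finset

/-- The two one-parameter formal deformations `(f_t, g_t)` and `(f'_t, g'_t)` are
equivalent: there is a formal isomorphism `Φ_t = Σ φᵢ tⁱ` with `φ₀ = id` such that
`Φ_t ∘ f'_t = f_t ∘ (Φ_t × Φ_t × Φ_t)` and `Φ_t ∘ g'_t = g_t ∘ Φ_t`. -/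
def AreEquivDef (F : Type*) {L : Type*} [Field F] [AddCommGroup L] [Module F L]
    (f : ℕ → L → L → L → L) (g : ℕ → L → L)
    (f' : ℕ → L → L → L → L) (g' : ℕ → L → L) : Prop :=
  ∃ φ : ℕ → L → L, φ 0 = id ∧ (∀ i, IsLinearMap F (φ i)) ∧
    (∀ a b c : LTSeries3 L, Gt φ (Ft f' a b c) = Ft f (Gt φ a) (Gt φ b) (Gt φ c)) ∧
    (∀ a : LTSeries3 L, Gt φ (Gt g' a) = Gt g (Gt φ a))


/-!
If `(f, g)` agrees with `(f 0, g 0)` up to degree `K - 1`, the degree-`K` parts of the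
fundamental identity and of the derivation rule say that `(f K, g K)` is a 2-cocycle. As
`H² = 0`, it is the coboundary `(dχ, -δχ)` of some `χ`, and conjugating the deformation by the
formal automorphism `id - χ tᴷ` kills its degree-`K` part without changing lower degrees. The
composite of these automorphisms for `K = 1, 2, …` converges `t`-adically, because the `K`-th one
is the identity modulo `tᴷ`, and the limit is an equivalence with the trivial deformation.

Identities between `F[[t]]`-multilinear maps of `L[[t]]` are checked on monomials `x tⁱ`: the maps
involved are additive and causal (the coefficient of `tⁿ` of a value only depends on the
coefficients of degree `≤ n` of the arguments), so they are determined by these values.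
-/

lemma SkewTri.apply_cycle {L V : Type*} [AddCommGroup V] {t : L → L → L → V} (h : SkewTri t)
    (x y z : L) : t x y z = t y z x := by
  rw [h.1 x y z, h.2 y x z, neg_neg]

section Series

variable {L : Type*} [AddCommGroup L]

def tShift (s : ℕ) (a : LTSeries3 L) : LTSeries3 L := fun m => if s ≤ m then a (m - s) else 0

lemma tShift_apply_of_lt {s m : ℕ} (h : m < s) (a : LTSeries3 L) : tShift s a m = 0 :=
  if_neg (by omega)

lemma tShift_apply_self (s : ℕ) (a : LTSeries3 L) : tShift s a s = a 0 := by
  simp [tShift]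

lemma tShift_zero (a : LTSeries3 L) : tShift 0 a = a := by
  funext m; simp [tShift]

lemma tShift_tShift (s s' : ℕ) (a : LTSeries3 L) : tShift s (tShift s' a) = tShift (s + s') a := by
  funext m
  simp only [tShift]
  split_ifs <;> first | rfl | omega | congr 1; omega

lemma tShift_single (s i : ℕ) (x : L) : tShift s (Pi.single i x) = Pi.single (s + i) x := by
  funext m
  simp only [tShift, Pi.single_apply]
  split_ifs <;> first | rfl | omega

/-- `a ≡ a 0 mod tᴷ`. -/
def IsConstMod {X : Type*} [Zero X] (K : ℕ) (a : ℕ → X) : Prop := ∀ i, 0 < i → i < K → a i = 0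

lemma IsConstMod.succ {X : Type*} [Zero X] {K : ℕ} {a : ℕ → X} (h : IsConstMod K a)
    (hK : a K = 0) : IsConstMod (K + 1) a := fun i hi hiK => by
  rcases (Nat.lt_succ_iff.mp hiK).lt_or_eq with hlt | rfl
  exacts [h i hi hlt, hK]

lemma isConstMod_single_zero (K : ℕ) (x : L) :
    IsConstMod K (Pi.single 0 x : LTSeries3 L) := fun i hi _ => by simp [hi.ne']

lemma eq_single_add_tShift_of_isConstMod {K : ℕ} (hK : 0 < K) {a : LTSeries3 L}
    (ha : IsConstMod K a) : a = Pi.single 0 (a 0) + tShift K (fun m => a (m + K)) := by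
  funext m
  simp only [Pi.add_apply, Pi.single_apply, tShift]
  split_ifs with h0 hKm hKm
  · omega
  · simp [h0]
  · rw [zero_add, Nat.sub_add_cancel hKm]
  · rw [add_zero]; exact ha m (Nat.pos_of_ne_zero h0) (by omega)

lemma gt_apply_zero (g : ℕ → L → L) (a : LTSeries3 L) : Gt g a 0 = g 0 (a 0) := by
  simp [Gt]

lemma ft_apply_zero (f : ℕ → L → L → L → L) (a b c : LTSeries3 L) :
    Ft f a b c 0 = f 0 (a 0) (b 0) (c 0) := by
  simp [Ft]

lemma sum_range_apply_single {M : Type*} [AddCommGroup M] (N j : ℕ) (y : L) (ψ : ℕ → L → M)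
    (hψ : ∀ r, ψ r 0 = 0) :
    ∑ r ∈ range (N + 1), ψ r ((Pi.single j y : LTSeries3 L) r) = if j ≤ N then ψ j y else 0 := by
  have h : ∀ r, ψ r ((Pi.single j y : LTSeries3 L) r) = if r = j then ψ j y else 0 := by
    intro r; by_cases hr : r = j <;> simp [hr, hψ]
  simp [h, Finset.sum_ite_eq']

end Series

section Causal

variable {L M : Type*}

def IsCausal (S : LTSeries3 L → LTSeries3 M) : Prop :=
  ∀ n a b, (∀ m ≤ n, a m = b m) → S a n = S b n

def IsCausal₃ (T : LTSeries3 L → LTSeries3 L → LTSeries3 L → LTSeries3 M) : Prop :=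
  ∀ n a a' b b' c c', (∀ m ≤ n, a m = a' m) → (∀ m ≤ n, b m = b' m) → (∀ m ≤ n, c m = c' m) →
    T a b c n = T a' b' c' n

lemma isCausal_id : IsCausal (fun a : LTSeries3 L => a) := fun n _ _ h => h n le_rfl

lemma IsCausal.comp {N : Type*} {S : LTSeries3 M → LTSeries3 N} (hS : IsCausal S)
    {A : LTSeries3 L → LTSeries3 M} (hA : IsCausal A) : IsCausal (fun a => S (A a)) :=
  fun n _ _ h => hS n _ _ fun m hm => hA m _ _ fun k hk => h k (by omega)

variable {T : LTSeries3 L → LTSeries3 L → LTSeries3 L → LTSeries3 M}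

lemma IsCausal₃.slot₁ (hT : IsCausal₃ T) (b c : LTSeries3 L) : IsCausal (T · b c) :=
  fun n _ _ ha => hT n _ _ _ _ _ _ ha (fun _ _ => rfl) fun _ _ => rfl

lemma IsCausal₃.slot₂ (hT : IsCausal₃ T) (a c : LTSeries3 L) : IsCausal (T a · c) :=
  fun n _ _ hb => hT n _ _ _ _ _ _ (fun _ _ => rfl) hb fun _ _ => rfl

lemma IsCausal₃.slot₃ (hT : IsCausal₃ T) (a b : LTSeries3 L) : IsCausal (T a b ·) :=
  fun n _ _ hc => hT n _ _ _ _ _ _ (fun _ _ => rfl) (fun _ _ => rfl) hc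

lemma IsCausal₃.comp {N : Type*} (hT : IsCausal₃ T) {S : LTSeries3 M → LTSeries3 N}
    (hS : IsCausal S) {A B C : LTSeries3 L → LTSeries3 L} (hA : IsCausal A) (hB : IsCausal B)
    (hC : IsCausal C) : IsCausal₃ (fun a b c => S (T (A a) (B b) (C c))) :=
  fun n a a' b b' c c' ha hb hc => hS n _ _ fun m hm => hT m _ _ _ _ _ _
    (fun k hk => hA k _ _ fun j hj => ha j (by omega))
    (fun k hk => hB k _ _ fun j hj => hb j (by omega))
    (fun k hk => hC k _ _ fun j hj => hc j (by omega))

lemma isCausal_gt [AddCommGroup L] (g : ℕ → L → L) : IsCausal (Gt g) := fun n a b h =>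
  Finset.sum_congr rfl fun p hp => by rw [h _ (Nat.sub_le n p)]

lemma isCausal_tShift [AddCommGroup L] (s : ℕ) : IsCausal (tShift s : LTSeries3 L → LTSeries3 L) :=
  fun n a b h => by
    simp only [tShift]
    split_ifs <;> simp [h _ (Nat.sub_le n s)]

lemma isCausal₃_ft [AddCommGroup L] (f : ℕ → L → L → L → L) : IsCausal₃ (Ft f) :=
  fun n a a' b b' c c' ha hb hc =>
    Finset.sum_congr rfl fun p _ => Finset.sum_congr rfl fun q hq =>
      Finset.sum_congr rfl fun r hr => by
        simp only [Finset.mem_range] at hq hr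
        rw [ha q (by omega), hb r (by omega), hc _ (by omega)]

variable {F : Type*} [Field F] [AddCommGroup L] [AddCommGroup M] [Module F L] [Module F M]

theorem IsCausal.ext {S₁ S₂ : LTSeries3 L → LTSeries3 M} (hl₁ : IsLinearMap F S₁)
    (hc₁ : IsCausal S₁) (hl₂ : IsLinearMap F S₂) (hc₂ : IsCausal S₂)
    (h : ∀ i x, S₁ (Pi.single i x) = S₂ (Pi.single i x)) : S₁ = S₂ := by
  funext a n
  set a' : LTSeries3 L := ∑ i ∈ range (n + 1), Pi.single i (a i)
  have ha' : ∀ m ≤ n, a m = a' m := fun m hm => by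
    simp [a', Finset.sum_apply, Finset.sum_pi_single, Nat.lt_succ_iff.mpr hm]
  rw [hc₁ n a a' ha', hc₂ n a a' ha']
  have e₁ := map_sum (hl₁.mk' S₁) (fun i => Pi.single i (a i)) (range (n + 1))
  have e₂ := map_sum (hl₂.mk' S₂) (fun i => Pi.single i (a i)) (range (n + 1))
  simp only [IsLinearMap.mk'_apply] at e₁ e₂
  simp only [a', e₁, e₂, h]

theorem IsCausal₃.ext {T₁ T₂ : LTSeries3 L → LTSeries3 L → LTSeries3 L → LTSeries3 M}
    (hl₁ : IsTrilin F T₁) (hc₁ : IsCausal₃ T₁) (hl₂ : IsTrilin F T₂) (hc₂ : IsCausal₃ T₂)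
    (h : ∀ i j l x y z, T₁ (Pi.single i x) (Pi.single j y) (Pi.single l z) =
      T₂ (Pi.single i x) (Pi.single j y) (Pi.single l z)) : T₁ = T₂ := by
  have h₃ : ∀ i j x y, T₁ (Pi.single i x) (Pi.single j y) = T₂ (Pi.single i x) (Pi.single j y) :=
    fun i j x y => IsCausal.ext (hl₁.2.2 _ _) (hc₁.slot₃ _ _) (hl₂.2.2 _ _) (hc₂.slot₃ _ _)
      (h i j · x y)
  have h₂ : ∀ i x, T₁ (Pi.single i x) = T₂ (Pi.single i x) := fun i x => funext₂ fun b c =>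
    congrFun (IsCausal.ext (hl₁.2.1 _ _) (hc₁.slot₂ _ c) (hl₂.2.1 _ _) (hc₂.slot₂ _ c)
      fun j y => congrFun (h₃ i j x y) c) b
  funext a b c
  exact congrFun (IsCausal.ext (hl₁.1 _ _) (hc₁.slot₁ b c) (hl₂.1 _ _) (hc₂.slot₁ b c)
    fun i x => by rw [h₂ i x]) a

end Causal

lemma IsLinearMap.comp {R X Y Z : Type*} [Semiring R] [AddCommMonoid X] [AddCommMonoid Y]
    [AddCommMonoid Z] [Module R X] [Module R Y] [Module R Z] {S : Y → Z} {A : X → Y}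
    (hS : IsLinearMap R S) (hA : IsLinearMap R A) : IsLinearMap R (fun x => S (A x)) :=
  ((hS.mk' S).comp (hA.mk' A)).isLinear

lemma IsTrilin.comp {F X M N Y : Type*} [Field F] [AddCommGroup X] [Module F X]
    [AddCommGroup M] [Module F M] [AddCommGroup N] [Module F N] [AddCommGroup Y] [Module F Y]
    {T : M → M → M → N} (hT : IsTrilin F T) {S : N → Y} (hS : IsLinearMap F S)
    {A B C : X → M} (hA : IsLinearMap F A) (hB : IsLinearMap F B) (hC : IsLinearMap F C) :
    IsTrilin F (fun x y z => S (T (A x) (B y) (C z))) :=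
  ⟨fun _ _ => hS.comp ((hT.1 _ _).comp hA), fun _ _ => hS.comp ((hT.2.1 _ _).comp hB),
    fun _ _ => hS.comp ((hT.2.2 _ _).comp hC)⟩

section Linear

variable {F L : Type*} [Field F] [AddCommGroup L] [Module F L]

lemma isLinearMap_tShift (s : ℕ) : IsLinearMap F (tShift s : LTSeries3 L → LTSeries3 L) := by
  constructor <;> intros <;> funext m <;> simp only [tShift, Pi.add_apply, Pi.smul_apply] <;>
    split_ifs <;> simp

lemma isLinearMap_gt {g : ℕ → L → L} (hg : ∀ p, IsLinearMap F (g p)) :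
    IsLinearMap F (Gt g) := by
  constructor <;> intros <;> funext n <;>
    simp [Gt, (hg _).map_add, (hg _).map_smul, Finset.sum_add_distrib, Finset.smul_sum]

lemma isTrilin_ft {f : ℕ → L → L → L → L} (hf : ∀ p, IsTrilin F (f p)) : IsTrilin F (Ft f) := by
  refine ⟨fun b c => ⟨?_, ?_⟩, fun a c => ⟨?_, ?_⟩, fun a b => ⟨?_, ?_⟩⟩ <;> intros <;>
    funext n <;>
    simp [Ft, ((hf _).1 _ _).map_add, ((hf _).2.1 _ _).map_add, ((hf _).2.2 _ _).map_add,
      ((hf _).1 _ _).map_smul, ((hf _).2.1 _ _).map_smul, ((hf _).2.2 _ _).map_smul,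
      Finset.sum_add_distrib, Finset.smul_sum]

end Linear

section Shift

variable {F L : Type*} [Field F] [AddCommGroup L] [Module F L]

lemma gt_single {g : ℕ → L → L} (hg : ∀ p, IsLinearMap F (g p)) (i : ℕ) (x : L) :
    Gt g (Pi.single i x) = tShift i (fun m => g m x) := by
  funext n
  have reflect : ∀ q ∈ range (n + 1), g (n + 1 - 1 - q)
      ((Pi.single i x : LTSeries3 L) (n - (n + 1 - 1 - q))) =
      g (n - q) ((Pi.single i x : LTSeries3 L) q) := fun q hq => by
    simp at hq; congr 2; omega
  rw [Gt, ← Finset.sum_range_reflect, Finset.sum_congr rfl reflect,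
    sum_range_apply_single _ _ _ _ fun q => (hg _).map_zero]
  rfl

lemma ft_single {f : ℕ → L → L → L → L} (hf : ∀ p, IsTrilin F (f p)) (i j l : ℕ) (x y z : L) :
    Ft f (Pi.single i x) (Pi.single j y) (Pi.single l z) =
      tShift (i + j + l) (fun m => f m x y z) := by
  funext n
  have inner : ∀ p ∈ range (n + 1), ∑ q ∈ range (n + 1 - p), ∑ r ∈ range (n + 1 - p - q),
      f p ((Pi.single i x : LTSeries3 L) q) ((Pi.single j y : LTSeries3 L) r)
        ((Pi.single l z : LTSeries3 L) (n - p - q - r)) =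
      if i + j + l ≤ n ∧ p = n - (i + j + l) then f p x y z else 0 := by
    intro p hp
    rw [Finset.mem_range] at hp
    have hr : ∀ q ∈ range (n + 1 - p), ∑ r ∈ range (n + 1 - p - q),
        f p ((Pi.single i x : LTSeries3 L) q) ((Pi.single j y : LTSeries3 L) r)
          ((Pi.single l z : LTSeries3 L) (n - p - q - r)) =
        if j ≤ n - p - q then f p ((Pi.single i x : LTSeries3 L) q) y
          ((Pi.single l z : LTSeries3 L) (n - p - q - j)) else 0 := by
      intro q hq
      rw [show n + 1 - p - q = n - p - q + 1 by simp at hq; omega]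
      exact sum_range_apply_single _ _ _ (fun r u => f p ((Pi.single i x : LTSeries3 L) q) u
        ((Pi.single l z : LTSeries3 L) (n - p - q - r))) fun r => ((hf p).2.1 _ _).map_zero
    rw [Finset.sum_congr rfl hr, show n + 1 - p = n - p + 1 by omega,
      sum_range_apply_single _ _ _ (fun q u => if j ≤ n - p - q then
        f p u y ((Pi.single l z : LTSeries3 L) (n - p - q - j)) else 0)
        (fun q => by simp [((hf p).1 _ _).map_zero])]
    simp only [Pi.single_apply]
    split_ifs <;> first | rfl | omega | exact ((hf p).2.2 _ _).map_zero
  rw [Ft, Finset.sum_congr rfl inner, tShift]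
  split_ifs with h <;> simp [h, Finset.sum_ite_eq']

lemma gt_tShift {g : ℕ → L → L} (hg : ∀ p, IsLinearMap F (g p)) (s : ℕ) (a : LTSeries3 L) :
    Gt g (tShift s a) = tShift s (Gt g a) := by
  have hG := isLinearMap_gt hg
  have hS : IsLinearMap F (tShift s : LTSeries3 L → LTSeries3 L) := isLinearMap_tShift s
  refine congrFun (IsCausal.ext (hG.comp hS) ((isCausal_gt g).comp (isCausal_tShift s))
    (hS.comp hG) ((isCausal_tShift s).comp (isCausal_gt g)) fun i x => ?_) a
  simp only [tShift_single, gt_single hg, tShift_tShift]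

lemma ft_tShift {f : ℕ → L → L → L → L} (hf : ∀ p, IsTrilin F (f p)) (i j l : ℕ)
    (a b c : LTSeries3 L) :
    Ft f (tShift i a) (tShift j b) (tShift l c) = tShift (i + j + l) (Ft f a b c) := by
  have hFt := isTrilin_ft hf
  have hid : IsLinearMap F (fun a : LTSeries3 L => a) := LinearMap.id.isLinear
  refine congrFun (congrFun (congrFun (IsCausal₃.ext
    (hFt.comp hid (isLinearMap_tShift i) (isLinearMap_tShift j) (isLinearMap_tShift l))
    ((isCausal₃_ft f).comp isCausal_id (isCausal_tShift i) (isCausal_tShift j) (isCausal_tShift l))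
    (hFt.comp (isLinearMap_tShift _) hid hid hid)
    ((isCausal₃_ft f).comp (isCausal_tShift _) isCausal_id isCausal_id isCausal_id)
    fun i' j' l' x y z => ?_) a) b) c
  simp only [tShift_single, ft_single hf, tShift_tShift]
  congr 1; omega

end Shift

section Gap

variable {F L : Type*} [Field F] [AddCommGroup L] [Module F L] {K : ℕ}

lemma gt_apply_of_isConstMod_fam_of_lt {g : ℕ → L → L} (hg : IsConstMod K g) {m : ℕ} (hm : m < K)
    (a : LTSeries3 L) : Gt g a m = g 0 (a m) := by
  rw [Gt, Finset.sum_eq_single 0 (fun p hp hp0 => by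
    rw [hg p (Nat.pos_of_ne_zero hp0) (by simp at hp; omega)]; rfl) (by simp), Nat.sub_zero]

lemma gt_apply_self_of_isConstMod_fam {g : ℕ → L → L} (hK : 0 < K) (hg : IsConstMod K g)
    (a : LTSeries3 L) : Gt g a K = g 0 (a K) + g K (a 0) := by
  rw [Gt, Finset.sum_range_succ, Finset.sum_eq_single 0 (fun p hp hp0 => by
    rw [hg p (Nat.pos_of_ne_zero hp0) (by simpa using hp)]; rfl) (by simp [hK]),
    Nat.sub_zero, Nat.sub_self]

lemma gt_eq_add_tShift_of_isConstMod {g : ℕ → L → L} (hg : ∀ p, IsLinearMap F (g p))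
    (hK : 0 < K) {a : LTSeries3 L} (ha : IsConstMod K a) :
    Gt g a = (fun m => g m (a 0)) + tShift K (Gt g (fun m => a (m + K))) := by
  conv_lhs => rw [eq_single_add_tShift_of_isConstMod hK ha]
  rw [(isLinearMap_gt hg).map_add, gt_single hg, tShift_zero, gt_tShift hg]

lemma gt_apply_of_isConstMod_of_lt {g : ℕ → L → L} (hg : ∀ p, IsLinearMap F (g p))
    (hK : 0 < K) {a : LTSeries3 L} (ha : IsConstMod K a) {m : ℕ} (hm : m < K) :
    Gt g a m = g m (a 0) := by
  rw [gt_eq_add_tShift_of_isConstMod hg hK ha, Pi.add_apply, tShift_apply_of_lt hm, add_zero]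

lemma gt_apply_self_of_isConstMod {g : ℕ → L → L} (hg : ∀ p, IsLinearMap F (g p))
    (hK : 0 < K) {a : LTSeries3 L} (ha : IsConstMod K a) :
    Gt g a K = g K (a 0) + g 0 (a K) := by
  rw [gt_eq_add_tShift_of_isConstMod hg hK ha, Pi.add_apply, tShift_apply_self, gt_apply_zero,
    zero_add]

lemma ft_eq_add_tShift_of_isConstMod {f : ℕ → L → L → L → L} (hf : ∀ p, IsTrilin F (f p))
    (hK : 0 < K) {a b c : LTSeries3 L} (ha : IsConstMod K a) (hb : IsConstMod K b)
    (hc : IsConstMod K c) :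
    Ft f a b c = (fun m => f m (a 0) (b 0) (c 0)) + tShift K
      (Ft f (fun m => a (m + K)) b c + Ft f (Pi.single 0 (a 0)) (fun m => b (m + K)) c +
        Ft f (Pi.single 0 (a 0)) (Pi.single 0 (b 0)) (fun m => c (m + K))) := by
  have hFt := isTrilin_ft hf
  have h₁ : ∀ a b c, Ft f (tShift K a) b c = tShift K (Ft f a b c) := fun a b c => by
    simpa [tShift_zero] using ft_tShift hf K 0 0 a b c
  have h₂ : ∀ a b c, Ft f a (tShift K b) c = tShift K (Ft f a b c) := fun a b c => by
    simpa [tShift_zero] using ft_tShift hf 0 K 0 a b c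
  have h₃ : ∀ a b c, Ft f a b (tShift K c) = tShift K (Ft f a b c) := fun a b c => by
    simpa [tShift_zero] using ft_tShift hf 0 0 K a b c
  have e₁ : Ft f a b c =
      Ft f (Pi.single 0 (a 0)) b c + tShift K (Ft f (fun m => a (m + K)) b c) := by
    nth_rewrite 1 [eq_single_add_tShift_of_isConstMod hK ha]
    rw [(hFt.1 _ _).map_add, h₁]
  have e₂ : Ft f (Pi.single 0 (a 0)) b c = Ft f (Pi.single 0 (a 0)) (Pi.single 0 (b 0)) c +
      tShift K (Ft f (Pi.single 0 (a 0)) (fun m => b (m + K)) c) := by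
    nth_rewrite 1 [eq_single_add_tShift_of_isConstMod hK hb]
    rw [(hFt.2.1 _ _).map_add, h₂]
  have e₃ : Ft f (Pi.single 0 (a 0)) (Pi.single 0 (b 0)) c =
      Ft f (Pi.single 0 (a 0)) (Pi.single 0 (b 0)) (Pi.single 0 (c 0)) +
      tShift K (Ft f (Pi.single 0 (a 0)) (Pi.single 0 (b 0)) (fun m => c (m + K))) := by
    nth_rewrite 1 [eq_single_add_tShift_of_isConstMod hK hc]
    rw [(hFt.2.2 _ _).map_add, h₃]
  rw [e₁, e₂, e₃, ft_single hf, tShift_zero, (isLinearMap_tShift (F := F) K).map_add,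
    (isLinearMap_tShift (F := F) K).map_add]
  abel

lemma ft_apply_of_isConstMod_of_lt {f : ℕ → L → L → L → L} (hf : ∀ p, IsTrilin F (f p))
    (hK : 0 < K) {a b c : LTSeries3 L} (ha : IsConstMod K a) (hb : IsConstMod K b)
    (hc : IsConstMod K c) {m : ℕ} (hm : m < K) : Ft f a b c m = f m (a 0) (b 0) (c 0) := by
  rw [ft_eq_add_tShift_of_isConstMod hf hK ha hb hc, Pi.add_apply, tShift_apply_of_lt hm,
    add_zero]

lemma ft_apply_self_of_isConstMod {f : ℕ → L → L → L → L} (hf : ∀ p, IsTrilin F (f p))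
    (hK : 0 < K) {a b c : LTSeries3 L} (ha : IsConstMod K a) (hb : IsConstMod K b)
    (hc : IsConstMod K c) :
    Ft f a b c K = f K (a 0) (b 0) (c 0) + f 0 (a K) (b 0) (c 0) + f 0 (a 0) (b K) (c 0) +
      f 0 (a 0) (b 0) (c K) := by
  rw [ft_eq_add_tShift_of_isConstMod hf hK ha hb hc, Pi.add_apply, tShift_apply_self]
  simp only [Pi.add_apply, ft_apply_zero, zero_add, Pi.single_eq_same]
  abel

end Gap

section Families

variable {F L : Type*} [Field F] [AddCommGroup L] [Module F L]

lemma isLinearMap_famApply {w : ℕ → L → L} (hw : ∀ p, IsLinearMap F (w p)) :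
    IsLinearMap F (fun x => (fun i => w i x : LTSeries3 L)) :=
  ⟨fun x y => funext fun i => (hw i).map_add x y, fun r x => funext fun i => (hw i).map_smul r x⟩

lemma isConstMod_famApply {K : ℕ} {w : ℕ → L → L} (hw : IsConstMod K w) (x : L) :
    IsConstMod K (fun i => w i x) :=
  fun i hi hiK => by simp only [hw i hi hiK, Pi.zero_apply]

def famComp (α β : ℕ → L → L) : ℕ → L → L := fun m x => Gt α (fun i => β i x) m

lemma isLinearMap_famComp {α β : ℕ → L → L} (hα : ∀ p, IsLinearMap F (α p))
    (hβ : ∀ p, IsLinearMap F (β p)) (m : ℕ) : IsLinearMap F (famComp α β m) :=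
  (LinearMap.proj m : LTSeries3 L →ₗ[F] L).isLinear.comp
    ((isLinearMap_gt hα).comp (isLinearMap_famApply hβ))

lemma gt_famComp {α β : ℕ → L → L} (hα : ∀ p, IsLinearMap F (α p))
    (hβ : ∀ p, IsLinearMap F (β p)) (a : LTSeries3 L) :
    Gt (famComp α β) a = Gt α (Gt β a) := by
  refine congrFun (IsCausal.ext (isLinearMap_gt (isLinearMap_famComp hα hβ)) (isCausal_gt _)
    ((isLinearMap_gt hα).comp (isLinearMap_gt hβ)) ((isCausal_gt α).comp (isCausal_gt β))
    fun i x => ?_) a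
  rw [gt_single (isLinearMap_famComp hα hβ), gt_single hβ, gt_tShift hα]
  rfl

lemma gt_single_zero_id (a : LTSeries3 L) : Gt (Pi.single 0 fun x => x) a = a := by
  funext n
  rw [Gt, Finset.sum_eq_single 0 (fun p _ hp => by simp [hp]) (by simp)]
  simp

/-- Solves `famComp w (famInv w) = Pi.single 0 id` degree by degree, assuming `w 0 = id`. -/
def famInv (w : ℕ → L → L) : ℕ → L → L
  | 0, x => x
  | m + 1, x => -∑ p ∈ range (m + 1), w (p + 1) (famInv w (m - p) x)

lemma famInv_zero (w : ℕ → L → L) : famInv w 0 = fun x => x := by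
  funext x; rw [famInv]

lemma isLinearMap_famInv {w : ℕ → L → L} (hw : ∀ p, IsLinearMap F (w p)) (m : ℕ) :
    IsLinearMap F (famInv w m) := by
  induction m using Nat.strong_induction_on with
  | _ m ih =>
    cases m with
    | zero => exact ⟨fun _ _ => by simp [famInv], fun _ _ => by simp [famInv]⟩
    | succ m =>
      constructor <;> intros <;>
        simp [famInv, (ih _ (Nat.lt_succ_of_le (Nat.sub_le m _))).map_add,
          (ih _ (Nat.lt_succ_of_le (Nat.sub_le m _))).map_smul, (hw _).map_add, (hw _).map_smul,
          Finset.sum_add_distrib, Finset.smul_sum]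
      abel

lemma famComp_famInv {w : ℕ → L → L} (hw0 : w 0 = fun x => x) :
    famComp w (famInv w) = Pi.single 0 fun x => x := by
  funext m x
  cases m with
  | zero => simp [famComp, Gt, famInv, hw0]
  | succ m =>
    rw [famComp, Gt, Finset.sum_range_succ', Nat.sub_zero, hw0]
    simp [famInv]

lemma gt_gt_famInv {w : ℕ → L → L} (hw : ∀ p, IsLinearMap F (w p)) (hw0 : w 0 = fun x => x)
    (a : LTSeries3 L) : Gt w (Gt (famInv w) a) = a := by
  rw [← gt_famComp hw (isLinearMap_famInv hw), famComp_famInv hw0, gt_single_zero_id]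

lemma isConstMod_famInv {K : ℕ} {w : ℕ → L → L} (hw : IsConstMod K w) :
    IsConstMod K (famInv w) := by
  rintro (_ | m) hm hmK
  · omega
  · funext x
    rw [famInv, Pi.zero_apply, Finset.sum_eq_zero fun p hp => ?_, neg_zero]
    rw [hw (p + 1) p.succ_pos (by simp at hp; omega)]; rfl

lemma famInv_apply_self {K : ℕ} (hK : 0 < K) {w : ℕ → L → L} (hw : IsConstMod K w) (x : L) :
    famInv w K x = -w K x := by
  obtain ⟨k, rfl⟩ : ∃ k, K = k + 1 := ⟨K - 1, by omega⟩
  rw [famInv, Finset.sum_range_succ, Finset.sum_eq_zero fun p hp => ?_, Nat.sub_self, zero_add,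
    famInv]
  · rw [hw (p + 1) p.succ_pos (by simp at hp; omega)]; rfl

end Families

section Pullback

variable {F L : Type*} [Field F] [AddCommGroup L] [Module F L]

def Intertwines (φ : ℕ → L → L) (f : ℕ → L → L → L → L) (g : ℕ → L → L)
    (f' : ℕ → L → L → L → L) (g' : ℕ → L → L) : Prop :=
  (∀ a b c, Gt φ (Ft f' a b c) = Ft f (Gt φ a) (Gt φ b) (Gt φ c)) ∧
    ∀ a, Gt φ (Gt g' a) = Gt g (Gt φ a)

lemma intertwines_single_zero_id (f : ℕ → L → L → L → L) (g : ℕ → L → L) :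
    Intertwines (Pi.single 0 fun x => x) f g f g :=
  ⟨fun _ _ _ => by simp only [gt_single_zero_id], fun _ => by simp only [gt_single_zero_id]⟩

lemma Intertwines.trans {φ ψ : ℕ → L → L} (hφ : ∀ p, IsLinearMap F (φ p))
    (hψ : ∀ p, IsLinearMap F (ψ p)) {f f' f'' : ℕ → L → L → L → L} {g g' g'' : ℕ → L → L}
    (h₁ : Intertwines φ f g f' g') (h₂ : Intertwines ψ f' g' f'' g'') :
    Intertwines (famComp φ ψ) f g f'' g'' :=
  ⟨fun _ _ _ => by simp only [gt_famComp hφ hψ, h₂.1, h₁.1],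
    fun _ => by simp only [gt_famComp hφ hψ, h₂.2, h₁.2]⟩

/-- `Ft f` and `Gt g` transported along `Gt w`, for `Gt v` a right inverse of `Gt w`. -/
def pullbackF (w v : ℕ → L → L) (f : ℕ → L → L → L → L) : ℕ → L → L → L → L :=
  fun m x y z => Gt v (Ft f (fun i => w i x) (fun i => w i y) (fun i => w i z)) m

def pullbackG (w v g : ℕ → L → L) : ℕ → L → L := famComp v (famComp g w)

variable {w v : ℕ → L → L} {f : ℕ → L → L → L → L} {g : ℕ → L → L}

lemma isTrilin_pullbackF (hw : ∀ p, IsLinearMap F (w p)) (hv : ∀ p, IsLinearMap F (v p))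
    (hf : ∀ p, IsTrilin F (f p)) (m : ℕ) : IsTrilin F (pullbackF w v f m) :=
  (isTrilin_ft hf).comp ((LinearMap.proj m : LTSeries3 L →ₗ[F] L).isLinear.comp
    (isLinearMap_gt hv)) (isLinearMap_famApply hw) (isLinearMap_famApply hw)
    (isLinearMap_famApply hw)

lemma ft_pullbackF (hw : ∀ p, IsLinearMap F (w p)) (hv : ∀ p, IsLinearMap F (v p))
    (hf : ∀ p, IsTrilin F (f p)) (a b c : LTSeries3 L) :
    Ft (pullbackF w v f) a b c = Gt v (Ft f (Gt w a) (Gt w b) (Gt w c)) := by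
  have hW := isLinearMap_gt hw
  refine congrFun (congrFun (congrFun (IsCausal₃.ext
    (isTrilin_ft (isTrilin_pullbackF hw hv hf)) (isCausal₃_ft _)
    ((isTrilin_ft hf).comp (isLinearMap_gt hv) hW hW hW)
    ((isCausal₃_ft f).comp (isCausal_gt v) (isCausal_gt w) (isCausal_gt w) (isCausal_gt w))
    fun i j l x y z => ?_) a) b) c
  rw [ft_single (isTrilin_pullbackF hw hv hf), gt_single hw, gt_single hw, gt_single hw,
    ft_tShift hf, gt_tShift hv]
  rfl

lemma gt_pullbackG (hw : ∀ p, IsLinearMap F (w p)) (hv : ∀ p, IsLinearMap F (v p))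
    (hg : ∀ p, IsLinearMap F (g p)) (a : LTSeries3 L) :
    Gt (pullbackG w v g) a = Gt v (Gt g (Gt w a)) := by
  rw [pullbackG, gt_famComp hv (isLinearMap_famComp hg hw), gt_famComp hg hw]

lemma skewTri_ft (hf : ∀ p, IsTrilin F (f p)) (hs : ∀ p, SkewTri (f p)) : SkewTri (Ft f) := by
  have hFt := isTrilin_ft hf
  have hneg : IsLinearMap F (fun a : LTSeries3 L => -a) := IsLinearMap.isLinearMap_neg
  constructor
  · intro a b c
    refine congrFun (congrFun (congrFun (IsCausal₃.ext (T₂ := fun a b c => -Ft f b a c) hFt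
      (isCausal₃_ft f) ⟨fun _ _ => hneg.comp (hFt.2.1 _ _), fun _ _ => hneg.comp (hFt.1 _ _),
        fun _ _ => hneg.comp (hFt.2.2 _ _)⟩
      (fun n _ _ _ _ _ _ ha hb hc => congrArg Neg.neg (isCausal₃_ft f n _ _ _ _ _ _ hb ha hc))
      fun i j l x y z => ?_) a) b) c
    funext n
    simp only [ft_single hf, tShift, Pi.neg_apply, add_comm j i]
    split_ifs
    · exact (hs _).1 x y z
    · rw [neg_zero]
  · intro a b c
    refine congrFun (congrFun (congrFun (IsCausal₃.ext (T₂ := fun a b c => -Ft f a c b) hFt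
      (isCausal₃_ft f) ⟨fun _ _ => hneg.comp (hFt.1 _ _), fun _ _ => hneg.comp (hFt.2.2 _ _),
        fun _ _ => hneg.comp (hFt.2.1 _ _)⟩
      (fun n _ _ _ _ _ _ ha hb hc => congrArg Neg.neg (isCausal₃_ft f n _ _ _ _ _ _ ha hc hb))
      fun i j l x y z => ?_) a) b) c
    funext n
    simp only [ft_single hf, tShift, Pi.neg_apply, add_right_comm i l j]
    split_ifs
    · exact (hs _).2 x y z
    · rw [neg_zero]

lemma skewTri_pullbackF (hv : ∀ p, IsLinearMap F (v p)) (hf : ∀ p, IsTrilin F (f p))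
    (hs : ∀ p, SkewTri (f p)) (m : ℕ) : SkewTri (pullbackF w v f m) :=
  ⟨fun x y z => by
    rw [pullbackF, (skewTri_ft hf hs).1 (fun i => w i x), (isLinearMap_gt hv).map_neg]; rfl,
   fun x y z => by
    rw [pullbackF, (skewTri_ft hf hs).2 (fun i => w i x), (isLinearMap_gt hv).map_neg]; rfl⟩

end Pullback

section Transport

variable {F L : Type*} [Field F] [AddCommGroup L] [Module F L]

structure IsFormal3LieDer (F : Type*) {L : Type*} [Field F] [AddCommGroup L] [Module F L]
    (f : ℕ → L → L → L → L) (g : ℕ → L → L) : Prop where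
  trilin : ∀ i, IsTrilin F (f i)
  skew : ∀ i, SkewTri (f i)
  linear : ∀ i, IsLinearMap F (g i)
  fundId : FundId (Ft f)
  deriv : IsDeriv3 (Ft f) (Gt g)

lemma isDeformation_iff {bracket : L → L → L → L} {θ : L → L} {f : ℕ → L → L → L → L}
    {g : ℕ → L → L} :
    IsDeformation F bracket θ f g ↔ f 0 = bracket ∧ g 0 = θ ∧ IsFormal3LieDer F f g :=
  ⟨fun ⟨h₀, h₀', h₁, h₂, h₃, h₄, h₅⟩ => ⟨h₀, h₀', h₁, h₂, h₃, h₄, h₅⟩,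
    fun ⟨h₀, h₀', h⟩ => ⟨h₀, h₀', h.1, h.2, h.3, h.4, h.5⟩⟩

variable {w v : ℕ → L → L} {f : ℕ → L → L → L → L} {g : ℕ → L → L}

lemma IsFormal3LieDer.pullback (h : IsFormal3LieDer F f g) (hw : ∀ p, IsLinearMap F (w p))
    (hv : ∀ p, IsLinearMap F (v p)) (hwv : ∀ a, Gt w (Gt v a) = a) :
    IsFormal3LieDer F (pullbackF w v f) (pullbackG w v g) where
  trilin := isTrilin_pullbackF hw hv h.trilin
  skew := skewTri_pullbackF hv h.trilin h.skew
  linear := isLinearMap_famComp hv (isLinearMap_famComp h.linear hw)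
  fundId a₁ a₂ a₃ a₄ a₅ := by
    simp only [ft_pullbackF hw hv h.trilin, hwv]
    rw [h.fundId, (isLinearMap_gt hv).map_add, (isLinearMap_gt hv).map_add]
  deriv a b c := by
    simp only [ft_pullbackF hw hv h.trilin, gt_pullbackG hw hv h.linear, hwv]
    rw [h.deriv, (isLinearMap_gt hv).map_add, (isLinearMap_gt hv).map_add]

lemma intertwines_pullback (hf : ∀ p, IsTrilin F (f p)) (hg : ∀ p, IsLinearMap F (g p))
    (hw : ∀ p, IsLinearMap F (w p)) (hv : ∀ p, IsLinearMap F (v p))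
    (hwv : ∀ a, Gt w (Gt v a) = a) : Intertwines w f g (pullbackF w v f) (pullbackG w v g) :=
  ⟨fun a b c => by rw [ft_pullbackF hw hv hf, hwv],
    fun a => by rw [gt_pullbackG hw hv hg, hwv]⟩

variable {K : ℕ}

lemma pullbackF_apply_of_lt (hf : ∀ p, IsTrilin F (f p)) (hK : 0 < K) (hw0 : w 0 = fun x => x)
    (hv0 : v 0 = fun x => x) (hwK : IsConstMod K w) (hvK : IsConstMod K v) {m : ℕ}
    (hm : m < K) : pullbackF w v f m = f m := by
  funext x y z
  rw [pullbackF, gt_apply_of_isConstMod_fam_of_lt hvK hm, hv0, ft_apply_of_isConstMod_of_lt hf hK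
    (isConstMod_famApply hwK x) (isConstMod_famApply hwK y) (isConstMod_famApply hwK z) hm, hw0]

lemma pullbackF_apply_self (hf : ∀ p, IsTrilin F (f p)) (hK : 0 < K) (hw0 : w 0 = fun x => x)
    (hv0 : v 0 = fun x => x) (hwK : IsConstMod K w) (hvK : IsConstMod K v) (x y z : L) :
    pullbackF w v f K x y z = f K x y z + f 0 (w K x) y z + f 0 x (w K y) z +
      f 0 x y (w K z) + v K (f 0 x y z) := by
  rw [pullbackF, gt_apply_self_of_isConstMod_fam hK hvK, hv0, ft_apply_self_of_isConstMod hf hK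
    (isConstMod_famApply hwK x) (isConstMod_famApply hwK y) (isConstMod_famApply hwK z),
    ft_apply_zero, hw0]

lemma pullbackG_apply_of_lt (hg : ∀ p, IsLinearMap F (g p)) (hK : 0 < K)
    (hw0 : w 0 = fun x => x) (hv0 : v 0 = fun x => x) (hwK : IsConstMod K w)
    (hvK : IsConstMod K v) {m : ℕ} (hm : m < K) : pullbackG w v g m = g m := by
  funext x
  rw [pullbackG, famComp, gt_apply_of_isConstMod_fam_of_lt hvK hm, hv0, famComp,
    gt_apply_of_isConstMod_of_lt hg hK (isConstMod_famApply hwK x) hm, hw0]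

lemma pullbackG_apply_self (hg : ∀ p, IsLinearMap F (g p)) (hK : 0 < K)
    (hw0 : w 0 = fun x => x) (hv0 : v 0 = fun x => x) (hwK : IsConstMod K w)
    (hvK : IsConstMod K v) (x : L) :
    pullbackG w v g K x = g K x + g 0 (w K x) + v K (g 0 x) := by
  rw [pullbackG, famComp, gt_apply_self_of_isConstMod_fam hK hvK, hv0, famComp, famComp,
    gt_apply_self_of_isConstMod hg hK (isConstMod_famApply hwK x), gt_apply_zero, hw0]

end Transport

section Cocycle

variable {F L : Type*} [Field F] [AddCommGroup L] [Module F L] {f : ℕ → L → L → L → L}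
  {g : ℕ → L → L} {K : ℕ}

lemma ft_single_zero (hf : ∀ p, IsTrilin F (f p)) (x y z : L) :
    Ft f (Pi.single 0 x) (Pi.single 0 y) (Pi.single 0 z) = fun m => f m x y z := by
  rw [ft_single hf, tShift_zero]

lemma d2c_eq_zero_of_isConstMod (h : IsFormal3LieDer F f g) (hK : 0 < K) (hf : IsConstMod K f) :
    d2c (f 0) (f 0) (f K) = 0 := by
  funext x₁ x₂ x₃ x₄ x₅
  have hc := isConstMod_single_zero (L := L) K
  have hfc : ∀ x y z, IsConstMod K (fun m => f m x y z) := fun x y z i hi hiK => by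
    simp [hf i hi hiK]
  have e := congrFun (h.fundId (Pi.single 0 x₁) (Pi.single 0 x₂) (Pi.single 0 x₃) (Pi.single 0 x₄)
    (Pi.single 0 x₅)) K
  simp only [ft_single_zero h.trilin, Pi.add_apply] at e
  simp only [ft_apply_self_of_isConstMod h.trilin hK (hc _) (hc _) (hfc _ _ _),
    ft_apply_self_of_isConstMod h.trilin hK (hfc _ _ _) (hc _) (hc _),
    ft_apply_self_of_isConstMod h.trilin hK (hc _) (hfc _ _ _) (hc _),
    Pi.single_eq_same, Pi.single_eq_of_ne hK.ne', ((h.trilin 0).1 _ _).map_zero,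
    ((h.trilin 0).2.1 _ _).map_zero, ((h.trilin 0).2.2 _ _).map_zero, add_zero] at e
  rw [d2c, Pi.zero_apply, Pi.zero_apply, Pi.zero_apply, Pi.zero_apply, Pi.zero_apply,
    ← (h.skew 0).apply_cycle (f K x₁ x₂ x₃) x₄ x₅, (h.skew 0).2 x₃ x₅ (f K x₁ x₂ x₄),
    ← sub_eq_zero_of_eq e]
  abel

lemma d1c_add_delta2c_eq_zero_of_isConstMod (h : IsFormal3LieDer F f g) (hK : 0 < K)
    (hg : IsConstMod K g) :
    d1c (f 0) (f 0) (g K) + delta2c (g 0) (g 0) (f K) = 0 := by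
  funext x y z
  have hc := isConstMod_single_zero (L := L) K
  have e := congrFun (h.deriv (Pi.single 0 x) (Pi.single 0 y) (Pi.single 0 z)) K
  simp only [ft_single_zero h.trilin, gt_single h.linear, tShift_zero, Pi.add_apply] at e
  simp only [gt_apply_self_of_isConstMod_fam hK hg,
    ft_apply_self_of_isConstMod h.trilin hK (isConstMod_famApply hg _) (hc _) (hc _),
    ft_apply_self_of_isConstMod h.trilin hK (hc _) (isConstMod_famApply hg _) (hc _),
    ft_apply_self_of_isConstMod h.trilin hK (hc _) (hc _) (isConstMod_famApply hg _),
    Pi.single_eq_same, Pi.single_eq_of_ne hK.ne', ((h.trilin 0).1 _ _).map_zero,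
    ((h.trilin 0).2.1 _ _).map_zero, ((h.trilin 0).2.2 _ _).map_zero, add_zero] at e
  rw [Pi.add_apply, Pi.add_apply, Pi.add_apply, d1c, delta2c, Pi.zero_apply, Pi.zero_apply,
    Pi.zero_apply, ← (h.skew 0).apply_cycle (g K x) y z, (h.skew 0).2 x z (g K y),
    ← sub_eq_zero_of_eq e.symm]
  abel

end Cocycle

section Step

variable {F L : Type*} [Field F] [AddCommGroup L] [Module F L] {K : ℕ}

def idSubMonomial (K : ℕ) (χ : L → L) : ℕ → L → L := Pi.single 0 (fun x => x) - Pi.single K χ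

lemma isLinearMap_idSubMonomial {χ : L → L} (hχ : IsLinearMap F χ) (p : ℕ) :
    IsLinearMap F (idSubMonomial K χ p) := by
  constructor <;> intros <;> simp only [idSubMonomial, Pi.sub_apply, Pi.single_apply] <;>
    split_ifs <;> simp [hχ.map_add, hχ.map_smul, smul_sub] <;> abel

lemma idSubMonomial_zero (hK : 0 < K) (χ : L → L) : idSubMonomial K χ 0 = fun x => x := by
  simp [idSubMonomial, hK.ne]

lemma idSubMonomial_self (hK : 0 < K) (χ : L → L) : idSubMonomial K χ K = -χ := by
  simp [idSubMonomial, hK.ne']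

lemma isConstMod_idSubMonomial (χ : L → L) : IsConstMod K (idSubMonomial K χ) :=
  fun i hi hiK => by simp [idSubMonomial, hi.ne', hiK.ne]

variable {f : ℕ → L → L → L → L} {g : ℕ → L → L} {χ : L → L}

lemma pullbackF_idSubMonomial_self (hf : ∀ p, IsTrilin F (f p)) (hs : SkewTri (f 0))
    (hK : 0 < K) (hfK : f K = d1c (f 0) (f 0) χ) :
    pullbackF (idSubMonomial K χ) (famInv (idSubMonomial K χ)) f K = 0 := by
  funext x y z
  have hw := isConstMod_idSubMonomial (K := K) χ
  rw [pullbackF_apply_self hf hK (idSubMonomial_zero hK χ) (famInv_zero _) hw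
    (isConstMod_famInv hw), famInv_apply_self hK hw, idSubMonomial_self hK, hfK]
  simp only [d1c, Pi.neg_apply, neg_neg, Pi.zero_apply, ((hf 0).1 _ _).map_neg,
    ((hf 0).2.1 _ _).map_neg, ((hf 0).2.2 _ _).map_neg]
  rw [← hs.apply_cycle (χ x) y z, hs.2 x (χ y) z]
  abel

lemma pullbackG_idSubMonomial_self (hg : ∀ p, IsLinearMap F (g p)) (hK : 0 < K)
    (hgK : g K = -delta1c (g 0) (g 0) χ) :
    pullbackG (idSubMonomial K χ) (famInv (idSubMonomial K χ)) g K = 0 := by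
  funext x
  have hw := isConstMod_idSubMonomial (K := K) χ
  rw [pullbackG_apply_self hg hK (idSubMonomial_zero hK χ) (famInv_zero _) hw
    (isConstMod_famInv hw), famInv_apply_self hK hw, idSubMonomial_self hK, hgK]
  simp only [delta1c, Pi.neg_apply, neg_neg, Pi.zero_apply, (hg 0).map_neg]
  abel

def H2Vanishes (F : Type*) {L : Type*} [Field F] [AddCommGroup L] [Module F L]
    (bracket : L → L → L → L) (θ : L → L) : Prop :=
  ∀ (ψ : L → L → L → L) (lam : L → L), IsTrilin F ψ → SkewTri ψ → IsLinearMap F lam →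
    d2c bracket bracket ψ = 0 → d1c bracket bracket lam + delta2c θ θ ψ = 0 →
    ∃ χ : L → L, IsLinearMap F χ ∧ ψ = d1c bracket bracket χ ∧ lam = - delta1c θ θ χ

theorem exists_intertwines_isConstMod_succ {bracket : L → L → L → L} {θ : L → L}
    (hH2 : H2Vanishes F bracket θ) (hdef : IsDeformation F bracket θ f g) (hK : 0 < K)
    (hf : IsConstMod K f) (hg : IsConstMod K g) :
    ∃ w f' g', w 0 = (fun x => x) ∧ (∀ p, IsLinearMap F (w p)) ∧ IsConstMod K w ∧
      IsDeformation F bracket θ f' g' ∧ IsConstMod (K + 1) f' ∧ IsConstMod (K + 1) g' ∧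
      Intertwines w f g f' g' := by
  obtain ⟨rfl, rfl, h⟩ := isDeformation_iff.mp hdef
  obtain ⟨χ, hχ, hfK, hgK⟩ := hH2 (f K) (g K) (h.trilin K) (h.skew K) (h.linear K)
    (d2c_eq_zero_of_isConstMod h hK hf) (d1c_add_delta2c_eq_zero_of_isConstMod h hK hg)
  set w := idSubMonomial K χ
  have hw : ∀ p, IsLinearMap F (w p) := isLinearMap_idSubMonomial hχ
  have hw0 : w 0 = fun x => x := idSubMonomial_zero hK χ
  have hwK : IsConstMod K w := isConstMod_idSubMonomial χ
  have hvK := isConstMod_famInv hwK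
  have hwv := gt_gt_famInv hw hw0
  refine ⟨w, pullbackF w (famInv w) f, pullbackG w (famInv w) g, hw0, hw, hwK,
    isDeformation_iff.mpr ⟨pullbackF_apply_of_lt h.trilin hK hw0 (famInv_zero w) hwK hvK hK,
      pullbackG_apply_of_lt h.linear hK hw0 (famInv_zero w) hwK hvK hK,
      h.pullback hw (isLinearMap_famInv hw) hwv⟩,
    IsConstMod.succ (fun i hi hiK => ?_) (pullbackF_idSubMonomial_self h.trilin (h.skew 0) hK hfK),
    IsConstMod.succ (fun i hi hiK => ?_) (pullbackG_idSubMonomial_self h.linear hK hgK),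
    intertwines_pullback h.trilin h.linear hw (isLinearMap_famInv hw) hwv⟩
  · rw [pullbackF_apply_of_lt h.trilin hK hw0 (famInv_zero w) hwK hvK hiK]; exact hf i hi hiK
  · rw [pullbackG_apply_of_lt h.linear hK hw0 (famInv_zero w) hwK hvK hiK]; exact hg i hi hiK

end Step

lemma exists_seq_of_step {α : Type*} {P : ℕ → α → Prop} {R : ℕ → α → α → Prop} {a₀ : α}
    (h₀ : P 0 a₀) (h : ∀ n a, P n a → ∃ b, P (n + 1) b ∧ R n a b) :
    ∃ s : ℕ → α, s 0 = a₀ ∧ ∀ n, P n (s n) ∧ R n (s n) (s (n + 1)) := by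
  choose! next hnext using h
  let s : ℕ → α := fun n => Nat.rec a₀ next n
  have hs : ∀ n, P n (s n) := fun n => Nat.rec h₀ (fun n ih => (hnext n _ ih).1) n
  exact ⟨s, rfl, fun n => ⟨hs n, (hnext n _ (hs n)).2⟩⟩

section Limit

variable {F L : Type*} [Field F] [AddCommGroup L] [Module F L]

lemma gt_apply_congr {g g' : ℕ → L → L} {a a' : LTSeries3 L} {n : ℕ} (hg : ∀ p ≤ n, g p = g' p)
    (ha : ∀ m ≤ n, a m = a' m) : Gt g a n = Gt g' a' n :=
  Finset.sum_congr rfl fun p hp => by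
    rw [hg p (by simp at hp; omega), ha _ (Nat.sub_le n p)]

lemma ft_apply_congr_fam {f f' : ℕ → L → L → L → L} {n : ℕ} (hf : ∀ p ≤ n, f p = f' p)
    (a b c : LTSeries3 L) : Ft f a b c n = Ft f' a b c n :=
  Finset.sum_congr rfl fun p hp => by rw [hf p (by simp at hp; omega)]

/-- Intertwining is a closed condition for the `t`-adic topology. -/
lemma intertwines_of_approx {φ g g' : ℕ → L → L} {f f' : ℕ → L → L → L → L}
    (h : ∀ n, ∃ φₙ f'ₙ g'ₙ, Intertwines φₙ f g f'ₙ g'ₙ ∧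
      ∀ p ≤ n, φₙ p = φ p ∧ f'ₙ p = f' p ∧ g'ₙ p = g' p) :
    Intertwines φ f g f' g' := by
  have hφ : ∀ {n φₙ} (a : LTSeries3 L), (∀ p ≤ n, φₙ p = φ p) → ∀ m ≤ n, Gt φₙ a m = Gt φ a m :=
    fun a hn m hm => gt_apply_congr (fun p hp => hn p (by omega)) fun _ _ => rfl
  constructor
  · intro a b c
    funext n
    obtain ⟨φₙ, f'ₙ, g'ₙ, hI, hn⟩ := h n
    calc Gt φ (Ft f' a b c) n = Gt φₙ (Ft f'ₙ a b c) n :=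
          gt_apply_congr (fun p hp => (hn p hp).1.symm) fun m hm =>
            ft_apply_congr_fam (fun p hp => (hn p (by omega)).2.1.symm) a b c
      _ = Ft f (Gt φₙ a) (Gt φₙ b) (Gt φₙ c) n := congrFun (hI.1 a b c) n
      _ = Ft f (Gt φ a) (Gt φ b) (Gt φ c) n := isCausal₃_ft f n _ _ _ _ _ _
          (hφ a fun p hp => (hn p hp).1) (hφ b fun p hp => (hn p hp).1)
          (hφ c fun p hp => (hn p hp).1)
  · intro a
    funext n
    obtain ⟨φₙ, f'ₙ, g'ₙ, hI, hn⟩ := h n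
    calc Gt φ (Gt g' a) n = Gt φₙ (Gt g'ₙ a) n :=
          gt_apply_congr (fun p hp => (hn p hp).1.symm) fun m hm =>
            gt_apply_congr (fun p hp => (hn p (by omega)).2.2.symm) fun _ _ => rfl
      _ = Gt g (Gt φₙ a) n := congrFun (hI.2 a) n
      _ = Gt g (Gt φ a) n := isCausal_gt g n _ _ (hφ a fun p hp => (hn p hp).1)

lemma isLinearMap_single_zero_id (p : ℕ) :
    IsLinearMap F ((Pi.single 0 fun x : L => x : ℕ → L → L) p) := by
  rcases p with _ | p
  · exact (LinearMap.id : L →ₗ[F] L).isLinear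
  · rw [Pi.single_eq_of_ne p.succ_ne_zero]
    exact (0 : L →ₗ[F] L).isLinear

theorem exists_intertwines_of_seq {fs : ℕ → ℕ → L → L → L → L} {gs ws : ℕ → ℕ → L → L}
    (hw0 : ∀ N, ws N 0 = fun x => x) (hw : ∀ N p, IsLinearMap F (ws N p))
    (hwK : ∀ N, IsConstMod (N + 1) (ws N))
    (hI : ∀ N, Intertwines (ws N) (fs N) (gs N) (fs (N + 1)) (gs (N + 1)))
    {f' : ℕ → L → L → L → L} {g' : ℕ → L → L}
    (hlim : ∀ N p, p ≤ N → fs N p = f' p ∧ gs N p = g' p) :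
    ∃ φ : ℕ → L → L, φ 0 = (fun x => x) ∧ (∀ p, IsLinearMap F (φ p)) ∧
      Intertwines φ (fs 0) (gs 0) f' g' := by
  let C : ℕ → ℕ → L → L := fun N =>
    Nat.rec (Pi.single 0 fun x => x) (fun N c => famComp c (ws N)) N
  have hC : ∀ N, (∀ p, IsLinearMap F (C N p)) ∧ Intertwines (C N) (fs 0) (gs 0) (fs N) (gs N) := by
    intro N
    induction N with
    | zero => exact ⟨isLinearMap_single_zero_id, intertwines_single_zero_id _ _⟩
    | succ N ih => exact ⟨isLinearMap_famComp ih.1 (hw N), ih.2.trans ih.1 (hw N) (hI N)⟩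
  have hstab : ∀ N p, p ≤ N → C (N + 1) p = C N p := fun N p hp => funext fun x => by
    show Gt (C N) (fun i => ws N i x) p = C N p x
    rw [gt_apply_of_isConstMod_of_lt (hC N).1 N.succ_pos (isConstMod_famApply (hwK N) x)
      (Nat.lt_succ_of_le hp), hw0]
  have hCp : ∀ p N, p ≤ N → C N p = C p p := fun p N hp => by
    induction N, hp using Nat.le_induction with
    | base => rfl
    | succ N hpN ih => rw [hstab N p hpN, ih]
  exact ⟨fun p => C p p, by simp [C], fun p => (hC p).1 p, intertwines_of_approx fun n =>
    ⟨C n, fs n, gs n, (hC n).2, fun p hp => ⟨hCp p n hp, hlim n p hp⟩⟩⟩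

end Limit

theorem exists_seq_intertwines_isConstMod {F L : Type*} [Field F] [AddCommGroup L] [Module F L]
    {bracket : L → L → L → L} {θ : L → L} (hH2 : H2Vanishes F bracket θ)
    {f : ℕ → L → L → L → L} {g : ℕ → L → L} (hdef : IsDeformation F bracket θ f g) :
    ∃ s : ℕ → (ℕ → L → L → L → L) × (ℕ → L → L), s 0 = (f, g) ∧ ∀ N,
      (IsDeformation F bracket θ (s N).1 (s N).2 ∧ IsConstMod (N + 1) (s N).1 ∧
        IsConstMod (N + 1) (s N).2) ∧
      ∃ w : ℕ → L → L, w 0 = (fun x => x) ∧ (∀ p, IsLinearMap F (w p)) ∧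
        IsConstMod (N + 1) w ∧ Intertwines w (s N).1 (s N).2 (s (N + 1)).1 (s (N + 1)).2 :=
  exists_seq_of_step (P := fun N (fg : (ℕ → L → L → L → L) × (ℕ → L → L)) =>
      IsDeformation F bracket θ fg.1 fg.2 ∧ IsConstMod (N + 1) fg.1 ∧ IsConstMod (N + 1) fg.2)
    (R := fun N (fg fg' : (ℕ → L → L → L → L) × (ℕ → L → L)) => ∃ w : ℕ → L → L,
      w 0 = (fun x => x) ∧ (∀ p, IsLinearMap F (w p)) ∧ IsConstMod (N + 1) w ∧
        Intertwines w fg.1 fg.2 fg'.1 fg'.2)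
    ⟨hdef, fun _ _ _ => by omega, fun _ _ _ => by omega⟩ fun N _ ⟨hd, hf, hg⟩ => by
      obtain ⟨w, f', g', hw0, hw, hwK, hd', hf', hg', hI⟩ :=
        exists_intertwines_isConstMod_succ hH2 hd N.succ_pos hf hg
      exact ⟨(f', g'), ⟨hd', hf', hg'⟩, w, hw0, hw, hwK, hI⟩

theorem statement12_general {F L : Type*} [Field F] [AddCommGroup L] [Module F L]
    (bracket : L → L → L → L) (θ : L → L)
    (hH2 : ∀ (ψ : L → L → L → L) (lam : L → L),
        IsTrilin F ψ → SkewTri ψ → IsLinearMap F lam →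
        d2c bracket bracket ψ = 0 →
        d1c bracket bracket lam + delta2c θ θ ψ = 0 →
        ∃ χ : L → L, IsLinearMap F χ ∧ ψ = d1c bracket bracket χ ∧ lam = - delta1c θ θ χ) :
    ∀ (f : ℕ → L → L → L → L) (g : ℕ → L → L),
      IsDeformation F bracket θ f g →
      AreEquivDef F f g
        (fun i => if i = 0 then bracket else 0) (fun i => if i = 0 then θ else 0) := by
  intro f g hdef
  obtain ⟨s, hs0, hs⟩ := exists_seq_intertwines_isConstMod hH2 hdef
  choose ws hw0 hw hwK hI using fun N => (hs N).2
  obtain ⟨φ, hφ0, hφ, hφI⟩ := exists_intertwines_of_seq hw0 hw hwK hI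
    (f' := fun i => if i = 0 then bracket else 0) (g' := fun i => if i = 0 then θ else 0)
    fun N p hp => by
      obtain ⟨hd, hf, hg⟩ := (hs N).1
      rcases Nat.eq_zero_or_pos p with rfl | hp0
      · simp [hd.1, hd.2.1]
      · simp [hp0.ne', hf p hp0 (by omega), hg p hp0 (by omega)]
  rw [hs0] at hφI
  exact ⟨φ, hφ0, hφ, hφI⟩

/-- Let `(L, bracket, θ)` be a 3-LieDer pair.  If
`H²_{3-LieDer}(L;L) = 0` — every 2-cocycle `(ψ, λ)` with coefficients in the adjoint
representation is a coboundary `∂χ = (dχ, -δχ)` — then `(L, θ)` is rigid: every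
one-parameter formal deformation of `(L, θ)` is equivalent to the trivial one
`(f₀, g₀) = (bracket, θ)`. -/
theorem statement12 {F L : Type*} [Field F] [CharZero F]
    [AddCommGroup L] [Module F L] [FiniteDimensional F L]
    (bracket : L → L → L → L) (hb3 : IsTrilin F bracket) (hbskew : SkewTri bracket)
    (hbFI : FundId bracket)
    (θ : L → L) (hθlin : IsLinearMap F θ) (hθ : IsDeriv3 bracket θ)
    (hH2 : ∀ (ψ : L → L → L → L) (lam : L → L),
        IsTrilin F ψ → SkewTri ψ → IsLinearMap F lam →
        d2c bracket bracket ψ = 0 →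
        d1c bracket bracket lam + delta2c θ θ ψ = 0 →
        ∃ χ : L → L, IsLinearMap F χ ∧ ψ = d1c bracket bracket χ ∧ lam = - delta1c θ θ χ) :
    ∀ (f : ℕ → L → L → L → L) (g : ℕ → L → L),
      IsDeformation F bracket θ f g →
      AreEquivDef F f g
        (fun i => if i = 0 then bracket else 0) (fun i => if i = 0 then θ else 0) :=
  statement12_general bracket θ hH2
end
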